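/- arXiv:2409.18348 — 6 statements merged into one kernel-verified Lean document; each statement's English description precedes it below -/
import Mathlib

section
/- Let f be a tropical polynomial in n variables and g a tropical polynomial in n variables with g ≠ −∞, and let φ = f ⊘ g. Let F be the tropical polynomial in n+1 variables defined by F(x, t) = max(f(x), t + g(x)) (i.e. F = f ⊕ (x_{n+1} ⊙ g)). Then V(F) equals the union of the three sets {(x, φ(x)) ∈ ℝ^{n+1} : x ∈ ℝⁿ, φ(x) ≠ −∞}, {(x, t) ∈ ℝ^{n+1} : x ∈ V(f), t < φ(x)}, and {(x, t) ∈ ℝ^{n+1} : x ∈ V(g), t > φ(x)}. -/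
open scoped Pointwise
open MeasureTheory

/-- A tropical (Laurent) polynomial in `n` variables: a finite support of integer
exponent vectors together with real coefficients. -/
structure TropPoly (n : ℕ) where
  support : Finset (Fin n → ℤ)
  coeff : (Fin n → ℤ) → ℝ

namespace TropPoly

variable {n : ℕ}

/-- The affine term `c_i + ⟨i, x⟩` of a tropical polynomial. -/
noncomputable def term (f : TropPoly n) (i : Fin n → ℤ) (x : Fin n → ℝ) : ℝ :=
  f.coeff i + ∑ j, (i j : ℝ) * x j

/-- Evaluation of a tropical polynomial, with value `⊥ = -∞` when the support is empty. -/
noncomputable def eval (f : TropPoly n) (x : Fin n → ℝ) : EReal :=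
  f.support.sup fun i => ((f.term i x : ℝ) : EReal)

/-- The tropical hypersurface `V(f)`: points where the maximum is attained at least twice
(all of `ℝⁿ` when `f = -∞`). -/
def V (f : TropPoly n) : Set (Fin n → ℝ) :=
  {x | f.support = ∅ ∨ ∃ i ∈ f.support, ∃ j ∈ f.support, i ≠ j ∧
    f.eval x = (f.term i x : EReal) ∧ f.eval x = (f.term j x : EReal)}

/-- The tropical quotient `f ⊘ g` as an `EReal`-valued function. -/
noncomputable def tropDiv (f g : TropPoly n) (x : Fin n → ℝ) : EReal :=
  f.eval x - g.eval x

/-- Real realization of an integer exponent vector. -/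
def expR {m : ℕ} : (Fin m → ℤ) → (Fin m → ℝ) := fun i j => (i j : ℝ)

/-- The Newton polytope of a tropical polynomial. -/
noncomputable def Newt (f : TropPoly n) : Set (Fin n → ℝ) :=
  convexHull ℝ (expR '' (f.support : Set (Fin n → ℤ)))

/-- The polytope `conv(Newt(f) × {0} ∪ Newt(g) × {1}) ⊂ ℝ^{n+1}`, which is the Newton
polytope of `f ⊕ (x_{n+1} ⊙ g)`. -/
noncomputable def pairPolytope (f g : TropPoly n) : Set (Fin (n + 1) → ℝ) :=
  convexHull ℝ
    ((fun v : Fin n → ℝ => Fin.snoc v (0 : ℝ)) '' f.Newt ∪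
     (fun v : Fin n → ℝ => Fin.snoc v (1 : ℝ)) '' g.Newt)

open Classical in
/-- The volume of a pair of tropical polynomials: the `(n+1)`-dimensional Lebesgue measure
of `conv(Newt(f) × {0} ∪ Newt(g) × {1})` if it is full-dimensional, `0` otherwise. -/
noncomputable def vol (f g : TropPoly n) : ℝ :=
  if affineSpan ℝ (pairPolytope f g) = ⊤ then (volume (pairPolytope f g)).toReal else 0

open Classical in
/-- Monomial complexity: the number of linear regions of `f`. -/
noncomputable def mComp (f : TropPoly n) : ℕ :=
  (f.support.filter fun i =>
    (interior {x : Fin n → ℝ | f.eval x = (f.term i x : EReal)}).Nonempty).card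

/-- Factorization complexity of a factorization `f = f₁ ⊙ ⋯ ⊙ f_m`. -/
noncomputable def fComp (l : List (TropPoly n)) : ℤ :=
  (l.map fun h => (mComp h : ℤ)).sum - ((l.length : ℤ) - 1)

/-- A tropical polynomial is a unit (tropical monomial) if, as a function, it is
integer affine: `x ↦ a + ⟨k, x⟩`. -/
def IsUnit (g : TropPoly n) : Prop :=
  ∃ (a : ℝ) (k : Fin n → ℤ), ∀ x, g.eval x = ((a + ∑ j, (k j : ℝ) * x j : ℝ) : EReal)

/-- A tropical polynomial is irreducible if in any pointwise factorization
`f = g ⊙ h` one of the factors is a unit. -/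
def IsIrreducible (f : TropPoly n) : Prop :=
  ∀ g h : TropPoly n, (∀ x, f.eval x = g.eval x + h.eval x) → g.IsUnit ∨ h.IsUnit

/-- The tropical polynomial `f ⊕ (x_{n+1} ⊙ g)` in `n+1` variables, whose value at
`(x, t)` is `max (f x) (t + g x)`. -/
noncomputable def oplusShift (f g : TropPoly n) : TropPoly (n + 1) where
  support :=
    f.support.image (fun i => Fin.snoc i (0 : ℤ)) ∪
    g.support.image (fun i => Fin.snoc i (1 : ℤ))
  coeff := fun j =>
    if j (Fin.last n) = 0 then f.coeff (fun k => j k.castSucc)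
    else g.coeff (fun k => j k.castSucc)

open Classical in
/-- The tropical product `f ⊙ g`: supports add (Minkowski sum) and the coefficient of `k`
is the maximum of `f.coeff i + g.coeff j` over decompositions `k = i + j`. -/
noncomputable def tmul (f g : TropPoly n) : TropPoly n where
  support := f.support + g.support
  coeff := fun k =>
    WithBot.unbotD 0
      (((f.support ×ˢ g.support).filter fun p => p.1 + p.2 = k).sup
        fun p => ((f.coeff p.1 + g.coeff p.2 : ℝ) : WithBot ℝ))

end TropPoly


/-!
At `p = (x, t)` the terms of `F = f ⊕ (x_{n+1} ⊙ g)` are the terms of `f` at `x` together with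
the terms of `g` at `x` shifted by `t`, so `F (x, t) = max (f x) (t + g x)`. Comparing `t` with
`φ x` decides which side of this maximum wins. Below the graph of `φ` only terms of `f` can attain
`F`, and they do so exactly when they attain `f`, so `(x, t) ∈ V(F)` iff `x ∈ V(f)`; above the graph
the same holds for `g`. On the graph a maximal term of `f` and a maximal term of `g` tie.
-/

theorem eq_iff_eq_and_eq_of_le_of_le {α : Type*} [PartialOrder α] {a b c : α}
    (hab : a ≤ b) (hbc : b ≤ c) : c = a ↔ c = b ∧ b = a := by
  refine ⟨fun hca => ?_, fun ⟨hcb, hba⟩ => hcb.trans hba⟩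
  have hba : b = a := le_antisymm (hbc.trans hca.le) hab
  exact ⟨hca.trans hba.symm, hba⟩

namespace TropPoly

variable {n : ℕ}

section Hypersurface

variable (f : TropPoly n) (x : Fin n → ℝ)

open Classical in
noncomputable def maxExponents : Finset (Fin n → ℤ) :=
  f.support.filter fun i => f.eval x = f.term i x

variable {f x}

theorem mem_maxExponents {i : Fin n → ℤ} :
    i ∈ f.maxExponents x ↔ i ∈ f.support ∧ f.eval x = f.term i x :=
  Finset.mem_filter

theorem term_le_eval {i : Fin n → ℤ} (hi : i ∈ f.support) : (f.term i x : EReal) ≤ f.eval x :=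
  Finset.le_sup (f := fun i => ((f.term i x : ℝ) : EReal)) hi

theorem maxExponents_nonempty (hf : f.support.Nonempty) : (f.maxExponents x).Nonempty := by
  obtain ⟨i, hi, he⟩ := f.support.exists_mem_eq_sup hf fun i => ((f.term i x : ℝ) : EReal)
  exact ⟨i, mem_maxExponents.2 ⟨hi, he⟩⟩

theorem exists_eval_eq_coe (hf : f.support.Nonempty) : ∃ r : ℝ, f.eval x = r := by
  obtain ⟨i, hi⟩ := maxExponents_nonempty (x := x) hf
  exact ⟨_, (mem_maxExponents.1 hi).2⟩

theorem support_nonempty_of_eval_ne_bot (h : f.eval x ≠ ⊥) : f.support.Nonempty := by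
  rw [Finset.nonempty_iff_ne_empty]
  intro hf
  exact h (by simp [eval, hf])

theorem mem_V_iff_of_nonempty (hf : f.support.Nonempty) :
    x ∈ f.V ↔ 1 < (f.maxExponents x).card := by
  simp only [V, Set.mem_ofPred_eq, hf.ne_empty, false_or, Finset.one_lt_card, mem_maxExponents]
  constructor
  · rintro ⟨i, hi, j, hj, hij, hei, hej⟩
    exact ⟨i, ⟨hi, hei⟩, j, ⟨hj, hej⟩, hij⟩
  · rintro ⟨i, ⟨hi, hei⟩, j, ⟨hj, hej⟩, hij⟩
    exact ⟨i, hi, j, hj, hij, hei, hej⟩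

end Hypersurface

section OplusShift

variable {f g : TropPoly n} {p : Fin (n + 1) → ℝ}

theorem support_oplusShift : (oplusShift f g).support =
    f.support.image (Fin.snoc · 0) ∪ g.support.image (Fin.snoc · 1) :=
  rfl

theorem mem_support_oplusShift {a : Fin (n + 1) → ℤ} :
    a ∈ (oplusShift f g).support ↔
      (∃ i ∈ f.support, Fin.snoc i 0 = a) ∨ ∃ j ∈ g.support, Fin.snoc j 1 = a := by
  simp [support_oplusShift]

theorem term_oplusShift_snoc_zero (i : Fin n → ℤ) :
    (oplusShift f g).term (Fin.snoc i 0) p = f.term i (Fin.init p) := by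
  simp [term, oplusShift, Fin.sum_univ_castSucc, Fin.init]

theorem term_oplusShift_snoc_one (j : Fin n → ℤ) :
    (oplusShift f g).term (Fin.snoc j 1) p = p (Fin.last n) + g.term j (Fin.init p) := by
  simp only [term, oplusShift, Fin.snoc_last, one_ne_zero, ↓reduceIte, Fin.snoc_castSucc,
    Fin.sum_univ_castSucc, Int.cast_one, one_mul, Fin.init]
  ring

theorem eval_oplusShift :
    (oplusShift f g).eval p = max (f.eval (Fin.init p)) (p (Fin.last n) + g.eval (Fin.init p)) := by
  have hshift : (p (Fin.last n) : EReal) + g.eval (Fin.init p) =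
      g.support.sup fun j => ((p (Fin.last n) + g.term j (Fin.init p) : ℝ) : EReal) :=
    Finset.apply_sup_eq_sup_comp_of_linearOrder _ (fun _ _ h => by gcongr) (EReal.add_bot _)
  rw [hshift, eval, support_oplusShift, Finset.sup_union, Finset.sup_image, Finset.sup_image]
  exact congrArg₂ max (Finset.sup_congr rfl fun i _ => by simp [term_oplusShift_snoc_zero])
    (Finset.sup_congr rfl fun j _ => by simp [term_oplusShift_snoc_one])

theorem support_oplusShift_nonempty :
    (oplusShift f g).support.Nonempty ↔ f.support.Nonempty ∨ g.support.Nonempty := by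
  simp [support_oplusShift]

theorem snoc_zero_mem_maxExponents_oplusShift {i : Fin n → ℤ} :
    Fin.snoc i 0 ∈ (oplusShift f g).maxExponents p ↔
      (oplusShift f g).eval p = f.eval (Fin.init p) ∧ i ∈ f.maxExponents (Fin.init p) := by
  have hmem : (Fin.snoc i 0 : Fin (n + 1) → ℤ) ∈ (oplusShift f g).support ↔ i ∈ f.support := by
    simp [support_oplusShift]
  rw [mem_maxExponents, mem_maxExponents, hmem, term_oplusShift_snoc_zero]
  refine ⟨fun ⟨hi, he⟩ => ?_, fun ⟨he, hi, he'⟩ => ⟨hi, he.trans he'⟩⟩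
  have hle : f.eval (Fin.init p) ≤ (oplusShift f g).eval p := eval_oplusShift ▸ le_max_left _ _
  obtain ⟨hM, hf⟩ := (eq_iff_eq_and_eq_of_le_of_le (term_le_eval hi) hle).1 he
  exact ⟨hM, hi, hf⟩

theorem snoc_one_mem_maxExponents_oplusShift {j : Fin n → ℤ} :
    Fin.snoc j 1 ∈ (oplusShift f g).maxExponents p ↔
      (oplusShift f g).eval p = p (Fin.last n) + g.eval (Fin.init p) ∧
        j ∈ g.maxExponents (Fin.init p) := by
  have hmem : (Fin.snoc j 1 : Fin (n + 1) → ℤ) ∈ (oplusShift f g).support ↔ j ∈ g.support := by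
    simp [support_oplusShift]
  have hcancel := (EReal.addLECancellable_coe (p (Fin.last n))).inj
    (b := g.eval (Fin.init p)) (c := g.term j (Fin.init p))
  rw [mem_maxExponents, mem_maxExponents, hmem, term_oplusShift_snoc_one, EReal.coe_add]
  refine ⟨fun ⟨hj, he⟩ => ?_, fun ⟨he, hj, he'⟩ => ⟨hj, he.trans (hcancel.2 he')⟩⟩
  have hle : (p (Fin.last n) : EReal) + g.eval (Fin.init p) ≤ (oplusShift f g).eval p :=
    eval_oplusShift ▸ le_max_right _ _
  obtain ⟨hM, hg⟩ :=
    (eq_iff_eq_and_eq_of_le_of_le (by gcongr; exact term_le_eval hj) hle).1 he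
  exact ⟨hM, hj, hcancel.1 hg⟩

theorem maxExponents_oplusShift_of_lt
    (h : p (Fin.last n) + g.eval (Fin.init p) < f.eval (Fin.init p)) :
    (oplusShift f g).maxExponents p = (f.maxExponents (Fin.init p)).image (Fin.snoc · 0) := by
  have hM : (oplusShift f g).eval p = f.eval (Fin.init p) := by
    rw [eval_oplusShift, max_eq_left h.le]
  ext a
  simp only [Finset.mem_image]
  constructor
  · intro ha
    rcases mem_support_oplusShift.1 (mem_maxExponents.1 ha).1 with ⟨i, -, rfl⟩ | ⟨j, -, rfl⟩
    · exact ⟨i, (snoc_zero_mem_maxExponents_oplusShift.1 ha).2, rfl⟩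
    · exact absurd (snoc_one_mem_maxExponents_oplusShift.1 ha).1 (hM ▸ h.ne')
  · rintro ⟨i, hi, rfl⟩
    exact snoc_zero_mem_maxExponents_oplusShift.2 ⟨hM, hi⟩

theorem maxExponents_oplusShift_of_gt
    (h : f.eval (Fin.init p) < p (Fin.last n) + g.eval (Fin.init p)) :
    (oplusShift f g).maxExponents p = (g.maxExponents (Fin.init p)).image (Fin.snoc · 1) := by
  have hM : (oplusShift f g).eval p = p (Fin.last n) + g.eval (Fin.init p) := by
    rw [eval_oplusShift, max_eq_right h.le]
  ext a
  simp only [Finset.mem_image]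
  constructor
  · intro ha
    rcases mem_support_oplusShift.1 (mem_maxExponents.1 ha).1 with ⟨i, -, rfl⟩ | ⟨j, -, rfl⟩
    · exact absurd (snoc_zero_mem_maxExponents_oplusShift.1 ha).1 (hM ▸ h.ne')
    · exact ⟨j, (snoc_one_mem_maxExponents_oplusShift.1 ha).2, rfl⟩
  · rintro ⟨j, hj, rfl⟩
    exact snoc_one_mem_maxExponents_oplusShift.2 ⟨hM, hj⟩

theorem mem_V_oplusShift_iff_of_lt
    (h : p (Fin.last n) + g.eval (Fin.init p) < f.eval (Fin.init p)) :
    p ∈ (oplusShift f g).V ↔ Fin.init p ∈ f.V := by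
  have hf : f.support.Nonempty := support_nonempty_of_eval_ne_bot (ne_bot_of_gt h)
  rw [mem_V_iff_of_nonempty (support_oplusShift_nonempty.2 (.inl hf)), mem_V_iff_of_nonempty hf,
    maxExponents_oplusShift_of_lt h, Finset.card_image_of_injective _ (Fin.snoc_left_injective _)]

theorem mem_V_oplusShift_iff_of_gt
    (h : f.eval (Fin.init p) < p (Fin.last n) + g.eval (Fin.init p)) :
    p ∈ (oplusShift f g).V ↔ Fin.init p ∈ g.V := by
  have hg : g.support.Nonempty := support_nonempty_of_eval_ne_bot fun hbot =>
    (ne_bot_of_gt h) (by rw [hbot, EReal.add_bot])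
  rw [mem_V_iff_of_nonempty (support_oplusShift_nonempty.2 (.inr hg)), mem_V_iff_of_nonempty hg,
    maxExponents_oplusShift_of_gt h, Finset.card_image_of_injective _ (Fin.snoc_left_injective _)]

theorem mem_V_oplusShift_of_eq (hg : g.support.Nonempty)
    (h : f.eval (Fin.init p) = p (Fin.last n) + g.eval (Fin.init p)) :
    p ∈ (oplusShift f g).V := by
  obtain ⟨j, hj⟩ := maxExponents_nonempty (x := Fin.init p) hg
  have hf : f.support.Nonempty := support_nonempty_of_eval_ne_bot <| by
    rw [h, (mem_maxExponents.1 hj).2, ← EReal.coe_add]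
    exact EReal.coe_ne_bot _
  obtain ⟨i, hi⟩ := maxExponents_nonempty (x := Fin.init p) hf
  have hM : (oplusShift f g).eval p = f.eval (Fin.init p) := by
    rw [eval_oplusShift, h, max_self]
  rw [mem_V_iff_of_nonempty (support_oplusShift_nonempty.2 (.inl hf)), Finset.one_lt_card]
  exact ⟨_, snoc_zero_mem_maxExponents_oplusShift.2 ⟨hM, hi⟩,
    _, snoc_one_mem_maxExponents_oplusShift.2 ⟨hM.trans h, hj⟩, by simp⟩

end OplusShift

end TropPoly

/-- **Duality theorem for tropical rational functions.**
For tropical polynomials `f` and `g ≠ -∞` with `φ = f ⊘ g`, the tropical hypersurface of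
`F = f ⊕ (x_{n+1} ⊙ g)` is the union of the graph of `φ` (where finite), the part of the
cylinder over `V(f)` strictly below the graph, and the part of the cylinder over `V(g)`
strictly above the graph. -/
theorem duality_for_tropical_rational_functions {n : ℕ} (f g : TropPoly n)
    (hg : g.support.Nonempty) :
    (TropPoly.oplusShift f g).V =
      {p : Fin (n + 1) → ℝ |
        TropPoly.tropDiv f g (Fin.init p) ≠ ⊥ ∧
        (p (Fin.last n) : EReal) = TropPoly.tropDiv f g (Fin.init p)} ∪
      {p : Fin (n + 1) → ℝ |
        Fin.init p ∈ f.V ∧ (p (Fin.last n) : EReal) < TropPoly.tropDiv f g (Fin.init p)} ∪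
      {p : Fin (n + 1) → ℝ |
        Fin.init p ∈ g.V ∧ TropPoly.tropDiv f g (Fin.init p) < (p (Fin.last n) : EReal)} := by
  ext p
  obtain ⟨r, hr⟩ := TropPoly.exists_eval_eq_coe (x := Fin.init p) hg
  have hφ : TropPoly.tropDiv f g (Fin.init p) = f.eval (Fin.init p) - r := by
    rw [TropPoly.tropDiv, hr]
  simp only [Set.mem_union, Set.mem_ofPred_eq]
  rcases lt_trichotomy (p (Fin.last n) : EReal) (TropPoly.tropDiv f g (Fin.init p)) with h | h | h
  · have hlt : p (Fin.last n) + g.eval (Fin.init p) < f.eval (Fin.init p) := by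
      rwa [hφ, EReal.lt_sub_iff_add_lt (.inl (EReal.coe_ne_bot r)) (.inl (EReal.coe_ne_top r)),
        ← hr] at h
    simp [TropPoly.mem_V_oplusShift_iff_of_lt hlt, h, h.ne, h.not_gt]
  · have heq : f.eval (Fin.init p) = p (Fin.last n) + g.eval (Fin.init p) := by
      rw [h, hφ, hr, EReal.sub_add_cancel]
    simp [TropPoly.mem_V_oplusShift_of_eq hg heq, ← h]
  · have hgt : f.eval (Fin.init p) < p (Fin.last n) + g.eval (Fin.init p) := by
      rwa [hφ, EReal.sub_lt_iff (.inl (EReal.coe_ne_bot r)) (.inl (EReal.coe_ne_top r)),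
        ← hr] at h
    simp [TropPoly.mem_V_oplusShift_iff_of_gt hgt, h, h.ne', h.not_gt]
end

section
/- Let φ : ℝ → ℝ be a tropical rational function in one variable that is not identically −∞, i.e. φ = f₀ ⊘ g₀ for some one-variable tropical polynomials f₀ ≠ −∞ and g₀ ≠ −∞. Then there exist one-variable tropical polynomials f ≠ −∞ and g ≠ −∞ with φ = f ⊘ g such that for every pair of one-variable tropical polynomials (f', g') with g' ≠ −∞ and φ = f' ⊘ g', one has vol(f, g) ≤ vol(f', g'). -/
open scoped Pointwise
open MeasureTheory

/-!
In one variable `Newt f` is the segment `[lowDeg f, highDeg f]`, so the pair polytope of `(f, g)`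
is a trapezoid of area `(width f + width g) / 2`. Near `+∞` (resp. `-∞`) the function `f ⊘ g` is
affine of slope `highDeg f - highDeg g` (resp. `lowDeg f - lowDeg g`), so `width f - width g`
depends only on `f ⊘ g`. Hence the volume of an expression is `width g` up to a constant, and an
expression whose denominator has least (integer) width has minimum volume.
-/

open Filter Set

def HasAsymptoticSlope (φ : ℝ → ℝ) (l : Filter ℝ) (s : ℝ) : Prop :=
  ∃ a, ∀ᶠ t in l, φ t = a + s * t

namespace HasAsymptoticSlope

variable {φ ψ : ℝ → ℝ} {l : Filter ℝ} {s s' : ℝ}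

theorem sub (hφ : HasAsymptoticSlope φ l s) (hψ : HasAsymptoticSlope ψ l s') :
    HasAsymptoticSlope (fun t => φ t - ψ t) l (s - s') := by
  obtain ⟨a, ha⟩ := hφ
  obtain ⟨b, hb⟩ := hψ
  exact ⟨a - b, (ha.and hb).mono fun t ⟨hat, hbt⟩ => by simp only [hat, hbt]; ring⟩

theorem unique [l.NeBot] (hl : l ≤ cofinite) (hs : HasAsymptoticSlope φ l s)
    (hs' : HasAsymptoticSlope φ l s') : s = s' := by
  obtain ⟨a, ha⟩ := hs
  obtain ⟨a', ha'⟩ := hs'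
  have hboth := ha.and ha'
  obtain ⟨t₁, h₁, h₁'⟩ := hboth.exists
  obtain ⟨t₂, ⟨h₂, h₂'⟩, hne⟩ := (hboth.and (le_cofinite_iff_eventually_ne.1 hl t₁)).exists
  refine mul_right_cancel₀ (sub_ne_zero.2 hne) ?_
  linear_combination h₂' - h₂ - h₁' + h₁

end HasAsymptoticSlope

theorem eventually_add_mul_le_atTop {a b s s' : ℝ} (h : s < s') :
    ∀ᶠ t in atTop, a + s * t ≤ b + s' * t :=
  ((tendsto_id.const_mul_atTop (sub_pos.2 h)).eventually_ge_atTop (a - b)).mono fun t ht => by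
    simp only [id, sub_mul] at ht
    linarith

theorem eventually_add_mul_le_atBot {a b s s' : ℝ} (h : s' < s) :
    ∀ᶠ t in atBot, a + s * t ≤ b + s' * t :=
  ((tendsto_id.const_mul_atBot (sub_pos.2 h)).eventually_le_atBot (b - a)).mono fun t ht => by
    simp only [id, sub_mul] at ht
    linarith

theorem Finset.eventually_sup'_eq {ι α β : Type*} [LinearOrder β] {l : Filter α} {s : Finset ι}
    (hs : s.Nonempty) {F : ι → α → β} {i₀ : ι} (hi₀ : i₀ ∈ s)
    (h : ∀ i ∈ s, ∀ᶠ x in l, F i x ≤ F i₀ x) : ∀ᶠ x in l, s.sup' hs (F · x) = F i₀ x :=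
  ((eventually_all_finset s).2 h).mono fun _ hx =>
    le_antisymm (Finset.sup'_le _ _ hx) (Finset.le_sup' (F · _) hi₀)

theorem convexHull_eq_Icc_of_isLeast_of_isGreatest {S : Set ℝ} {a b : ℝ} (ha : IsLeast S a)
    (hb : IsGreatest S b) : convexHull ℝ S = Icc a b :=
  (convexHull_min (fun _ hx => mem_Icc.2 ⟨ha.2 hx, hb.2 hx⟩) (convex_Icc a b)).antisymm <|
    (segment_eq_Icc (ha.2 hb.1)).symm.subset.trans (segment_subset_convexHull ha.1 hb.1)

def trapezoid (a b c d : ℝ) : Set (ℝ × ℝ) :=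
  {p | p.2 ∈ Icc 0 1 ∧ p.1 ∈ Icc ((1 - p.2) * a + p.2 * c) ((1 - p.2) * b + p.2 * d)}

theorem convexHull_union_Icc_prod_eq_trapezoid {a b c d : ℝ} (hab : a ≤ b) (hcd : c ≤ d) :
    convexHull ℝ (Icc a b ×ˢ {0} ∪ Icc c d ×ˢ {1}) = trapezoid a b c d := by
  rw [convexHull_union ((nonempty_Icc.2 hab).prod (singleton_nonempty 0))
      ((nonempty_Icc.2 hcd).prod (singleton_nonempty 1)),
    ((convex_Icc a b).prod (convex_singleton 0)).convexHull_eq,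
    ((convex_Icc c d).prod (convex_singleton 1)).convexHull_eq]
  ext ⟨u, t⟩
  simp only [mem_convexJoin, trapezoid, mem_ofPred_eq, mem_prod, mem_singleton_iff, Prod.exists]
  constructor
  · rintro ⟨p, _, ⟨⟨hpa, hpb⟩, rfl⟩, q, _, ⟨⟨hqc, hqd⟩, rfl⟩, α, β, hα, hβ, hαβ, hx⟩
    simp only [Prod.ext_iff, Prod.smul_mk, Prod.mk_add_mk, smul_eq_mul, mul_zero, mul_one,
      zero_add] at hx
    obtain ⟨rfl, rfl⟩ := hx
    obtain rfl : α = 1 - β := by linarith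
    exact ⟨⟨hβ, by linarith⟩, by nlinarith, by nlinarith⟩
  · rintro ⟨⟨ht0, ht1⟩, hu⟩
    rw [← segment_eq_Icc (by nlinarith)] at hu
    obtain ⟨α, β, hα, hβ, hαβ, rfl⟩ := hu
    refine ⟨α * a + β * b, 0, ⟨?_, rfl⟩, α * c + β * d, 1, ⟨?_, rfl⟩,
      1 - t, t, by linarith, ht0, by ring, ?_⟩
    · rw [← segment_eq_Icc hab]; exact ⟨α, β, hα, hβ, hαβ, rfl⟩
    · rw [← segment_eq_Icc hcd]; exact ⟨α, β, hα, hβ, hαβ, rfl⟩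
    · simp only [Prod.smul_mk, Prod.mk_add_mk, smul_eq_mul, Prod.mk.injEq]
      constructor <;> ring

theorem volume_trapezoid {a b c d : ℝ} (hab : a ≤ b) (hcd : c ≤ d) :
    volume (trapezoid a b c d) = ENNReal.ofReal ((b - a + (d - c)) / 2) := by
  have hmeas : MeasurableSet (trapezoid a b c d) := by
    unfold trapezoid
    measurability
  have hslice : ∀ t, volume ((fun u => (u, t)) ⁻¹' trapezoid a b c d) =
      (Icc 0 1).indicator (fun t => ENNReal.ofReal ((1 - t) * (b - a) + t * (d - c))) t := by
    intro t
    by_cases ht : t ∈ Icc (0 : ℝ) 1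
    · have hsec : (fun u => (u, t)) ⁻¹' trapezoid a b c d =
          Icc ((1 - t) * a + t * c) ((1 - t) * b + t * d) := ext fun _ => and_iff_right ht
      rw [indicator_of_mem ht, hsec, Real.volume_Icc]
      congr 1
      ring
    · rw [indicator_of_notMem ht, ← measure_empty (μ := (volume : Measure ℝ))]
      exact congrArg _ (eq_empty_of_forall_notMem fun u hu => ht hu.1)
  have hnonneg : ∀ t ∈ Icc (0 : ℝ) 1, 0 ≤ (1 - t) * (b - a) + t * (d - c) := fun t ht => by
    nlinarith [ht.1, ht.2]
  have hintegral : ∫ t in Icc (0 : ℝ) 1, ((1 - t) * (b - a) + t * (d - c)) =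
      (b - a + (d - c)) / 2 := by
    rw [integral_Icc_eq_integral_Ioc, ← intervalIntegral.integral_of_le zero_le_one,
      intervalIntegral.integral_congr (g := fun t => (b - a) + ((d - c) - (b - a)) * t)
        fun t _ => by ring,
      intervalIntegral.integral_add intervalIntegrable_const
        (intervalIntegral.intervalIntegrable_id.const_mul _),
      intervalIntegral.integral_const_mul, integral_id, intervalIntegral.integral_const]
    norm_num
    ring
  rw [Measure.volume_eq_prod, Measure.prod_apply_symm hmeas]
  simp_rw [hslice]
  rw [lintegral_indicator measurableSet_Icc, ← hintegral, ofReal_integral_eq_lintegral_ofReal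
    (Continuous.integrableOn_Icc (by fun_prop))
    ((ae_restrict_iff' measurableSet_Icc).2 (Eventually.of_forall hnonneg))]

namespace TropPoly

variable {n : ℕ}

noncomputable def evalReal (f : TropPoly n) (hf : f.support.Nonempty) (x : Fin n → ℝ) : ℝ :=
  f.support.sup' hf (f.term · x)

theorem eval_eq_coe_evalReal (f : TropPoly n) (hf : f.support.Nonempty) (x : Fin n → ℝ) :
    f.eval x = f.evalReal hf x := by
  rw [evalReal,
    Finset.apply_sup'_eq_sup'_comp hf _ fun _ _ => EReal.coe_strictMono.monotone.map_max, eval,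
    Finset.sup'_eq_sup]
  rfl

theorem tropDiv_eq_coe_sub {f g : TropPoly n} (hf : f.support.Nonempty) (hg : g.support.Nonempty)
    (x : Fin n → ℝ) : tropDiv f g x = (f.evalReal hf x - g.evalReal hg x : ℝ) := by
  rw [tropDiv, eval_eq_coe_evalReal f hf, eval_eq_coe_evalReal g hg, EReal.coe_sub]

theorem evalReal_sub_eq_of_tropDiv_eq {f g f' g' : TropPoly n} (hf : f.support.Nonempty)
    (hg : g.support.Nonempty) (hf' : f'.support.Nonempty) (hg' : g'.support.Nonempty)
    (h : ∀ x, tropDiv f g x = tropDiv f' g' x) (x : Fin n → ℝ) :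
    f.evalReal hf x - g.evalReal hg x = f'.evalReal hf' x - g'.evalReal hg' x :=
  EReal.coe_injective <| by rw [← tropDiv_eq_coe_sub, ← tropDiv_eq_coe_sub, h]

theorem support_nonempty_of_tropDiv_eq {f g f₀ g₀ : TropPoly n} (hf₀ : f₀.support.Nonempty)
    (hg₀ : g₀.support.Nonempty) (h : ∀ x, tropDiv f g x = tropDiv f₀ g₀ x) :
    f.support.Nonempty := by
  rw [Finset.nonempty_iff_ne_empty]
  intro hf
  have h0 := h 0
  rw [tropDiv_eq_coe_sub hf₀ hg₀, tropDiv, eval, hf, Finset.sup_empty, EReal.bot_sub] at h0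
  exact EReal.bot_ne_coe _ h0

theorem vol_eq_toReal_volume (f g : TropPoly n) :
    vol f g = (volume (pairPolytope f g)).toReal := by
  classical
  rw [vol, ite_eq_left_iff]
  intro h
  rw [measure_mono_null (subset_affineSpan ℝ _) (Measure.addHaar_affineSubspace _ _ h),
    ENNReal.toReal_zero]

section Degrees

variable (f : TropPoly 1) (hf : f.support.Nonempty)

noncomputable def lowDeg : ℤ := f.support.inf' hf fun i : Fin 1 → ℤ => i 0

noncomputable def highDeg : ℤ := f.support.sup' hf fun i : Fin 1 → ℤ => i 0

noncomputable def width : ℤ := f.highDeg hf - f.lowDeg hf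

theorem term_const (i : Fin 1 → ℤ) (t : ℝ) : f.term i (fun _ => t) = f.coeff i + i 0 * t := by
  simp [term]

theorem isLeast_lowDeg :
    IsLeast ((fun i : Fin 1 → ℤ => (i 0 : ℝ)) '' f.support) (f.lowDeg hf) := by
  obtain ⟨i, hi, h⟩ := Finset.exists_mem_eq_inf' hf fun i : Fin 1 → ℤ => i 0
  refine ⟨⟨i, hi, by rw [lowDeg, h]⟩, ?_⟩
  rintro _ ⟨j, hj, rfl⟩
  exact Int.cast_le.2 (Finset.inf'_le (fun i : Fin 1 → ℤ => i 0) hj)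

theorem isGreatest_highDeg :
    IsGreatest ((fun i : Fin 1 → ℤ => (i 0 : ℝ)) '' f.support) (f.highDeg hf) := by
  obtain ⟨i, hi, h⟩ := Finset.exists_mem_eq_sup' hf fun i : Fin 1 → ℤ => i 0
  refine ⟨⟨i, hi, by rw [highDeg, h]⟩, ?_⟩
  rintro _ ⟨j, hj, rfl⟩
  exact Int.cast_le.2 (Finset.le_sup' (fun i : Fin 1 → ℤ => i 0) hj)

theorem lowDeg_le_highDeg : (f.lowDeg hf : ℝ) ≤ f.highDeg hf :=
  (f.isLeast_lowDeg hf).2 (f.isGreatest_highDeg hf).1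

theorem width_nonneg : 0 ≤ f.width hf :=
  sub_nonneg.2 (by exact_mod_cast f.lowDeg_le_highDeg hf)

theorem newt_eq_image :
    f.Newt = (fun r : ℝ => fun _ : Fin 1 => r) '' Icc (f.lowDeg hf : ℝ) (f.highDeg hf) := by
  have hexp : expR '' (f.support : Set (Fin 1 → ℤ)) =
      (LinearMap.pi fun _ => LinearMap.id : ℝ →ₗ[ℝ] Fin 1 → ℝ) ''
        ((fun i : Fin 1 → ℤ => (i 0 : ℝ)) '' f.support) := by
    rw [image_image]
    exact image_congr fun i _ => funext fun j => by rw [Fin.fin_one_eq_zero j]; rfl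
  rw [Newt, hexp, ← LinearMap.image_convexHull,
    convexHull_eq_Icc_of_isLeast_of_isGreatest (f.isLeast_lowDeg hf) (f.isGreatest_highDeg hf)]
  rfl

theorem hasAsymptoticSlope_atTop :
    HasAsymptoticSlope (fun t => f.evalReal hf fun _ => t) atTop (f.highDeg hf) := by
  obtain ⟨i₀, hi₀, hmax⟩ := Finset.exists_mem_eq_sup' hf fun i : Fin 1 → ℤ => i 0
  refine ⟨f.coeff i₀, (Finset.eventually_sup'_eq (F := fun i t => f.term i fun _ => t) hf hi₀
    fun i hi => ?_).mono fun t ht => ?_⟩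
  · rcases eq_or_ne i i₀ with rfl | hne
    · exact Eventually.of_forall fun _ => le_rfl
    have hlt : i 0 < i₀ 0 := (hmax ▸ Finset.le_sup' (fun i : Fin 1 → ℤ => i 0) hi).lt_of_ne
      fun h => hne (funext (Fin.forall_fin_one.2 h))
    simp only [term_const]
    exact eventually_add_mul_le_atTop (by exact_mod_cast hlt)
  · exact ht.trans (by rw [term_const, highDeg, hmax])

theorem hasAsymptoticSlope_atBot :
    HasAsymptoticSlope (fun t => f.evalReal hf fun _ => t) atBot (f.lowDeg hf) := by
  obtain ⟨i₀, hi₀, hmin⟩ := Finset.exists_mem_eq_inf' hf fun i : Fin 1 → ℤ => i 0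
  refine ⟨f.coeff i₀, (Finset.eventually_sup'_eq (F := fun i t => f.term i fun _ => t) hf hi₀
    fun i hi => ?_).mono fun t ht => ?_⟩
  · rcases eq_or_ne i i₀ with rfl | hne
    · exact Eventually.of_forall fun _ => le_rfl
    have hlt : i₀ 0 < i 0 := (hmin ▸ Finset.inf'_le (fun i : Fin 1 → ℤ => i 0) hi).lt_of_ne
      fun h => hne (funext (Fin.forall_fin_one.2 h.symm))
    simp only [term_const]
    exact eventually_add_mul_le_atBot (by exact_mod_cast hlt)
  · exact ht.trans (by rw [term_const, lowDeg, hmin])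

end Degrees

theorem pairPolytope_eq_preimage_trapezoid {f g : TropPoly 1} (hf : f.support.Nonempty)
    (hg : g.support.Nonempty) :
    f.pairPolytope g = MeasurableEquiv.finTwoArrow ⁻¹'
      trapezoid (f.lowDeg hf) (f.highDeg hf) (g.lowDeg hg) (g.highDeg hg) := by
  have hlin : IsLinearMap ℝ (MeasurableEquiv.finTwoArrow : (Fin 2 → ℝ) → ℝ × ℝ) :=
    ⟨fun _ _ => rfl, fun _ _ => rfl⟩
  rw [eq_comm, preimage_eq_iff_eq_image MeasurableEquiv.finTwoArrow.bijective, pairPolytope,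
    hlin.image_convexHull, ← convexHull_union_Icc_prod_eq_trapezoid (f.lowDeg_le_highDeg hf)
      (g.lowDeg_le_highDeg hg), f.newt_eq_image hf, g.newt_eq_image hg, image_union,
    image_image, image_image, image_image, image_image, prod_singleton, prod_singleton]
  rfl

theorem vol_eq_width_add_width_div_two {f g : TropPoly 1} (hf : f.support.Nonempty)
    (hg : g.support.Nonempty) :
    vol f g = (f.width hf + g.width hg : ℝ) / 2 := by
  rw [vol_eq_toReal_volume, pairPolytope_eq_preimage_trapezoid hf hg,
    (volume_preserving_finTwoArrow ℝ).measure_preimage_equiv,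
    volume_trapezoid (f.lowDeg_le_highDeg hf) (g.lowDeg_le_highDeg hg), ENNReal.toReal_ofReal]
  · push_cast [width]
    ring
  · linarith [f.lowDeg_le_highDeg hf, g.lowDeg_le_highDeg hg]

theorem width_sub_eq_of_tropDiv_eq {f g f' g' : TropPoly 1} (hf : f.support.Nonempty)
    (hg : g.support.Nonempty) (hf' : f'.support.Nonempty) (hg' : g'.support.Nonempty)
    (h : ∀ x, tropDiv f g x = tropDiv f' g' x) :
    f.width hf - g.width hg = f'.width hf' - g'.width hg' := by
  have hφ : (fun t => f.evalReal hf (fun _ => t) - g.evalReal hg fun _ => t) =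
      fun t => f'.evalReal hf' (fun _ => t) - g'.evalReal hg' fun _ => t :=
    funext fun _ => evalReal_sub_eq_of_tropDiv_eq hf hg hf' hg' h _
  have high : (f.highDeg hf - g.highDeg hg : ℝ) = f'.highDeg hf' - g'.highDeg hg' :=
    ((f.hasAsymptoticSlope_atTop hf).sub (g.hasAsymptoticSlope_atTop hg)).unique
      atTop_le_cofinite
      (hφ ▸ (f'.hasAsymptoticSlope_atTop hf').sub (g'.hasAsymptoticSlope_atTop hg'))
  have low : (f.lowDeg hf - g.lowDeg hg : ℝ) = f'.lowDeg hf' - g'.lowDeg hg' :=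
    ((f.hasAsymptoticSlope_atBot hf).sub (g.hasAsymptoticSlope_atBot hg)).unique
      atBot_le_cofinite
      (hφ ▸ (f'.hasAsymptoticSlope_atBot hf').sub (g'.hasAsymptoticSlope_atBot hg'))
  have : ((f.width hf - g.width hg : ℤ) : ℝ) = f'.width hf' - g'.width hg' := by
    push_cast [width]
    linarith
  exact_mod_cast this

theorem exists_tropDiv_eq_forall_width_le {f₀ g₀ : TropPoly 1} (hf₀ : f₀.support.Nonempty)
    (hg₀ : g₀.support.Nonempty) :
    ∃ f g : TropPoly 1, f.support.Nonempty ∧ ∃ hg : g.support.Nonempty,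
      (∀ x, tropDiv f g x = tropDiv f₀ g₀ x) ∧
      ∀ (f' g' : TropPoly 1) (hg' : g'.support.Nonempty),
        (∀ x, tropDiv f' g' x = tropDiv f₀ g₀ x) → g.width hg ≤ g'.width hg' := by
  obtain ⟨_, ⟨f, g, hf, hg, hfg, rfl⟩, hmin⟩ := Int.exists_least_of_bdd
    (P := fun w => ∃ f g : TropPoly 1, f.support.Nonempty ∧ ∃ hg : g.support.Nonempty,
      (∀ x, tropDiv f g x = tropDiv f₀ g₀ x) ∧ g.width hg = w)
    ⟨0, by rintro _ ⟨-, g, -, hg, -, rfl⟩; exact g.width_nonneg hg⟩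
    ⟨_, f₀, g₀, hf₀, hg₀, fun _ => rfl, rfl⟩
  exact ⟨f, g, hf, hg, hfg, fun f' g' hg' h' =>
    hmin _ ⟨f', g', support_nonempty_of_tropDiv_eq hf₀ hg₀ h', hg', h', rfl⟩⟩

end TropPoly

/-- **Existence of a minimum volume expression in one variable.**
Every tropical rational function `φ ≠ -∞` on `ℝ` admits an expression `φ = f ⊘ g`
of minimum volume. -/
theorem exists_min_vol_expression (f₀ g₀ : TropPoly 1)
    (hf₀ : f₀.support.Nonempty) (hg₀ : g₀.support.Nonempty) :
    ∃ f g : TropPoly 1, f.support.Nonempty ∧ g.support.Nonempty ∧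
      (∀ x, TropPoly.tropDiv f g x = TropPoly.tropDiv f₀ g₀ x) ∧
      ∀ f' g' : TropPoly 1, g'.support.Nonempty →
        (∀ x, TropPoly.tropDiv f' g' x = TropPoly.tropDiv f₀ g₀ x) →
        TropPoly.vol f g ≤ TropPoly.vol f' g' := by
  obtain ⟨f, g, hf, hg, hfg, hmin⟩ := TropPoly.exists_tropDiv_eq_forall_width_le hf₀ hg₀
  refine ⟨f, g, hf, hg, hfg, fun f' g' hg' hfg' => ?_⟩
  have hf' := TropPoly.support_nonempty_of_tropDiv_eq hf₀ hg₀ hfg'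
  have hinv := TropPoly.width_sub_eq_of_tropDiv_eq hf hg hf' hg' fun x =>
    (hfg x).trans (hfg' x).symm
  have hle := hmin f' g' hg' hfg'
  rw [TropPoly.vol_eq_width_add_width_div_two hf hg,
    TropPoly.vol_eq_width_add_width_div_two hf' hg']
  gcongr ?_ / 2
  exact_mod_cast (by omega : f.width hf + g.width hg ≤ f'.width hf' + g'.width hg')
end

section
/- Let Δ and Δ' be nonempty bounded convex subsets of ℝ², let c > 0 be a real number, and let v ∈ ℝ². Write Δ₀ = {(x, y, 0) : (x, y) ∈ Δ} ⊂ ℝ³, Δ'_c = {(x, y, c) : (x, y) ∈ Δ'} ⊂ ℝ³, and Δ'_c + v = {(x + v₁, y + v₂, c) : (x, y) ∈ Δ'}. Then the three-dimensional Lebesgue measure of the convex hull of Δ₀ ∪ Δ'_c equals the three-dimensional Lebesgue measure of the convex hull of Δ₀ ∪ (Δ'_c + v). -/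
/-!
The shear `(x, y, z) ↦ (x + z v₁ / c, y + z v₂ / c, z)` fixes the bottom layer `Δ × {0}` and
translates the top layer `Δ' × {c}` by `v`. Being linear it commutes with convex hulls, and being
a transvection it has determinant `1`, so it preserves Lebesgue measure.
-/

open MeasureTheory Module

instance MeasureTheory.Measure.prod.volume_isAddHaarMeasure {α β : Type*}
    [AddGroup α] [TopologicalSpace α] [MeasureSpace α] [MeasurableAdd α]
    [AddGroup β] [TopologicalSpace β] [MeasureSpace β] [MeasurableAdd β]
    [(volume : Measure α).IsAddHaarMeasure] [(volume : Measure β).IsAddHaarMeasure]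
    [SFinite (volume : Measure α)] [SFinite (volume : Measure β)] :
    (volume : Measure (α × β)).IsAddHaarMeasure :=
  Measure.prod.instIsAddHaarMeasure _ _

theorem MeasureTheory.Measure.addHaar_image_transvection {E : Type*} [NormedAddCommGroup E]
    [NormedSpace ℝ E] [MeasurableSpace E] [BorelSpace E] [FiniteDimensional ℝ E]
    (μ : Measure E) [μ.IsAddHaarMeasure] {f : Dual ℝ E} {w : E} (hw : f w = 0) (s : Set E) :
    μ (LinearMap.transvection f w '' s) = μ s := by
  simp [Measure.addHaar_image_linearMap, hw]

namespace Prismatoid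

def height : Dual ℝ (ℝ × ℝ × ℝ) := LinearMap.snd ℝ ℝ ℝ ∘ₗ LinearMap.snd ℝ ℝ (ℝ × ℝ)

def shear (u : ℝ × ℝ) : ℝ × ℝ × ℝ →ₗ[ℝ] ℝ × ℝ × ℝ :=
  LinearMap.transvection height (u.1, u.2, 0)

theorem height_horizontal (u : ℝ × ℝ) : height (u.1, u.2, 0) = 0 := rfl

theorem image_shear_layer (u : ℝ × ℝ) (h : ℝ) (S : Set (ℝ × ℝ)) :
    shear u '' ((fun p : ℝ × ℝ => (p.1, p.2, h)) '' S) =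
      (fun p : ℝ × ℝ => (p.1 + h * u.1, p.2 + h * u.2, h)) '' S := by
  rw [← Set.image_comp]
  refine Set.image_congr fun p _ => ?_
  simp [shear, LinearMap.transvection.apply, height]

end Prismatoid

theorem volume_convexHull_translate_top_general (Δ Δ' : Set (ℝ × ℝ))
    (c : ℝ) (hc : 0 < c) (v : ℝ × ℝ) :
    volume (convexHull ℝ
      ((fun p : ℝ × ℝ => (p.1, p.2, (0 : ℝ))) '' Δ ∪
       (fun p : ℝ × ℝ => (p.1, p.2, c)) '' Δ')) =
    volume (convexHull ℝ
      ((fun p : ℝ × ℝ => (p.1, p.2, (0 : ℝ))) '' Δ ∪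
       (fun p : ℝ × ℝ => (p.1 + v.1, p.2 + v.2, c)) '' Δ')) := by
  have hshear : Prismatoid.shear (c⁻¹ • v) ''
      ((fun p : ℝ × ℝ => (p.1, p.2, (0 : ℝ))) '' Δ ∪ (fun p : ℝ × ℝ => (p.1, p.2, c)) '' Δ') =
      (fun p : ℝ × ℝ => (p.1, p.2, (0 : ℝ))) '' Δ ∪
        (fun p : ℝ × ℝ => (p.1 + v.1, p.2 + v.2, c)) '' Δ' := by
    simp [Set.image_union, Prismatoid.image_shear_layer, hc.ne']
  rw [← hshear, ← LinearMap.image_convexHull]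
  exact (Measure.addHaar_image_transvection _ (Prismatoid.height_horizontal _) _).symm

/-- **Translating the top face of a prismatoid horizontally does not change its volume.**
For nonempty bounded convex sets `Δ, Δ' ⊂ ℝ²`, `c > 0` and `v ∈ ℝ²`, the volume of
`conv(Δ × {0} ∪ Δ' × {c})` equals the volume of `conv(Δ × {0} ∪ (Δ' + v) × {c})`. -/
theorem volume_convexHull_translate_top (Δ Δ' : Set (ℝ × ℝ))
    (hΔconv : Convex ℝ Δ) (hΔ'conv : Convex ℝ Δ')
    (hΔbdd : Bornology.IsBounded Δ) (hΔ'bdd : Bornology.IsBounded Δ')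
    (hΔne : Δ.Nonempty) (hΔ'ne : Δ'.Nonempty)
    (c : ℝ) (hc : 0 < c) (v : ℝ × ℝ) :
    volume (convexHull ℝ
      ((fun p : ℝ × ℝ => (p.1, p.2, (0 : ℝ))) '' Δ ∪
       (fun p : ℝ × ℝ => (p.1, p.2, c)) '' Δ')) =
    volume (convexHull ℝ
      ((fun p : ℝ × ℝ => (p.1, p.2, (0 : ℝ))) '' Δ ∪
       (fun p : ℝ × ℝ => (p.1 + v.1, p.2 + v.2, c)) '' Δ')) :=
  volume_convexHull_translate_top_general Δ Δ' c hc v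
end

section
/- Let Δ₁ = conv{(0,0),(1,0),(0,1)} and Δ₂ = conv{(1,0),(0,1),(1,1)} in ℝ², let T ⊂ ℤ² be a finite nonempty set, and let Δ = conv(T); assume Δ is not a single point. Then for each i ∈ {1, 2}: the area of the Minkowski sum Δ_i + Δ equals 3/2 if Δ is a translate of one of conv{(0,0),(1,0)}, conv{(0,0),(0,1)}, conv{(1,0),(0,1)}; equals 2 if Δ is a translate of Δ_i; and is at least 5/2 in all other cases. -/
/-!
Areas are computed by cutting regions into pieces `{(x, y) | x ∈ I, f x ≤ y ≤ g x}` with `f`, `g`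
affine, whose areas are integrals; the swap `(x, y) ↦ (y, x)` fixes `Δ₁` and halves the casework.

If `T` contains points `p, q` with `q.1 - p.1 ≥ 2`, `q.2 - p.2 ≥ 2` or `q - p = (1, 1)`, then
already `Δ₁ + [p, q]` has area at least `5/2`. Otherwise `T` lies in a translate of
`{(0,0), (1,0), (0,1)}` or of its negative, so `Δ` is a point, a unit segment, or a translate of
`Δ₁` or of `Δ₂`; the hexagon `Δ₁ + Δ₂` has area `3`, and `Δ₁ + Δ₁ = 2 • Δ₁` has area `4 · 1/2`.
Finally `Δ₂ = (1, 1) - Δ₁`, so `Δ₂ + Δ` has the area of `Δ₁ + (-Δ)` and the case of `Δ₂` is the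
case of `Δ₁` for `-T`.
-/

open scoped Pointwise
open MeasureTheory

/-- The triangle `conv{(0,0), (1,0), (0,1)} ⊂ ℝ²`. -/
noncomputable def Δ₁ : Set (ℝ × ℝ) :=
  convexHull ℝ {((0 : ℝ), (0 : ℝ)), ((1 : ℝ), (0 : ℝ)), ((0 : ℝ), (1 : ℝ))}

/-- The triangle `conv{(1,0), (0,1), (1,1)} ⊂ ℝ²`. -/
noncomputable def Δ₂ : Set (ℝ × ℝ) :=
  convexHull ℝ {((1 : ℝ), (0 : ℝ)), ((0 : ℝ), (1 : ℝ)), ((1 : ℝ), (1 : ℝ))}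

/-- `Δ` is a translate of one of the three unit lattice segments
`conv{(0,0),(1,0)}`, `conv{(0,0),(0,1)}`, `conv{(1,0),(0,1)}`. -/
def IsUnitSegmentTranslate (Δ : Set (ℝ × ℝ)) : Prop :=
  ∃ v : ℝ × ℝ,
    Δ = v +ᵥ convexHull ℝ {((0 : ℝ), (0 : ℝ)), ((1 : ℝ), (0 : ℝ))} ∨
    Δ = v +ᵥ convexHull ℝ {((0 : ℝ), (0 : ℝ)), ((0 : ℝ), (1 : ℝ))} ∨
    Δ = v +ᵥ convexHull ℝ {((1 : ℝ), (0 : ℝ)), ((0 : ℝ), (1 : ℝ))}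

/-- The three-case lower bound for the area of `Δᵢ + Δ`. -/
def AreaTrichotomy (Δi Δ : Set (ℝ × ℝ)) : Prop :=
  (IsUnitSegmentTranslate Δ → volume (Δi + Δ) = 3 / 2) ∧
  ((∃ v : ℝ × ℝ, Δ = v +ᵥ Δi) → volume (Δi + Δ) = 2) ∧
  (¬ IsUnitSegmentTranslate Δ → ¬ (∃ v : ℝ × ℝ, Δ = v +ᵥ Δi) →
    5 / 2 ≤ volume (Δi + Δ))

open Set
open scoped ENNReal

theorem mem_convexHull_triple {𝕜 E : Type*} [Field 𝕜] [LinearOrder 𝕜] [IsStrictOrderedRing 𝕜]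
    [AddCommGroup E] [Module 𝕜 E] {a b c : E} {α β γ : 𝕜} (hα : 0 ≤ α) (hβ : 0 ≤ β)
    (hγ : 0 ≤ γ) (h : α + β + γ = 1) : α • a + β • b + γ • c ∈ convexHull 𝕜 {a, b, c} := by
  have := (convex_convexHull 𝕜 {a, b, c}).sum_mem (t := Finset.univ) (w := ![α, β, γ])
    (z := ![a, b, c]) (fun i _ => by fin_cases i <;> assumption) (by simp [Fin.sum_univ_three, h])
    (fun i _ => subset_convexHull 𝕜 _ (by fin_cases i <;> simp))
  simpa [Fin.sum_univ_three, add_assoc] using this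

theorem volume_preimage_swap (s : Set (ℝ × ℝ)) : volume (Prod.swap ⁻¹' s) = volume s :=
  (Measure.measurePreserving_swap (μ := volume) (ν := volume)).measure_preimage_equiv
    (f := MeasurableEquiv.prodComm) s

theorem preimage_swap_add {M N : Type*} [AddZeroClass M] [AddZeroClass N] (s t : Set (M × N)) :
    Prod.swap ⁻¹' (s + t) = Prod.swap ⁻¹' s + Prod.swap ⁻¹' t := by
  simp only [← image_swap_eq_preimage_swap]
  exact image_add (AddEquiv.prodComm : M × N ≃+ N × M)

theorem preimage_swap_segment {E F : Type*} [AddCommGroup E] [Module ℝ E] [AddCommGroup F]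
    [Module ℝ F] (P Q : F × E) : Prod.swap ⁻¹' segment ℝ P Q = segment ℝ P.swap Q.swap := by
  rw [← image_swap_eq_preimage_swap]
  exact image_segment ℝ (LinearEquiv.prodComm ℝ F E).toLinearMap.toAffineMap P Q

theorem Convex.addHaar_add_self {E : Type*} [NormedAddCommGroup E] [NormedSpace ℝ E]
    [MeasurableSpace E] [BorelSpace E] [FiniteDimensional ℝ E] (μ : Measure E)
    [μ.IsAddHaarMeasure] {s : Set E} (hs : Convex ℝ s) :
    μ (s + s) = 2 ^ Module.finrank ℝ E * μ s := by
  rw [← one_smul ℝ s, ← hs.add_smul zero_le_one zero_le_one, one_smul, Measure.addHaar_smul]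
  norm_num

/-- The closed counterpart of Mathlib's `regionBetween`, which uses `Ioo (f x) (g x)`. -/
def closedRegionBetween {α : Type*} (f g : α → ℝ) (s : Set α) : Set (α × ℝ) :=
  {p | p.1 ∈ s ∧ p.2 ∈ Icc (f p.1) (g p.1)}

theorem volume_closedRegionBetween_eq_lintegral {α : Type*} [MeasurableSpace α] {μ : Measure α}
    {f g : α → ℝ} {s : Set α} (hf : Measurable f) (hg : Measurable g) (hs : MeasurableSet s) :
    μ.prod volume (closedRegionBetween f g s) = ∫⁻ x in s, ENNReal.ofReal (g x - f x) ∂μ := by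
  rw [Measure.prod_apply (s := closedRegionBetween f g s)
    (measurableSet_region_between_cc hf hg hs), ← lintegral_indicator hs]
  congr 1 with x
  by_cases hx : x ∈ s <;> simp [closedRegionBetween, hx, -mem_Icc]

section closedRegionBetween

variable {f g : ℝ → ℝ} {a b : ℝ}

theorem volume_closedRegionBetween_Ioc (hab : a ≤ b) (hf : Continuous f) (hg : Continuous g)
    (hfg : ∀ x ∈ Icc a b, f x ≤ g x) :
    volume (closedRegionBetween f g (Ioc a b)) = ENNReal.ofReal (∫ x in a..b, g x - f x) := by
  rw [Measure.volume_eq_prod,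
    volume_closedRegionBetween_eq_lintegral hf.measurable hg.measurable measurableSet_Ioc,
    intervalIntegral.integral_of_le hab, ofReal_integral_eq_lintegral_ofReal]
  · exact ((hg.sub hf).integrableOn_Icc).mono_set Ioc_subset_Icc_self
  · exact ae_restrict_of_forall_mem measurableSet_Ioc fun x hx =>
      sub_nonneg.2 (hfg x (Ioc_subset_Icc_self hx))

theorem volume_closedRegionBetween_Icc (hab : a ≤ b) (hf : Continuous f) (hg : Continuous g)
    (hfg : ∀ x ∈ Icc a b, f x ≤ g x) :
    volume (closedRegionBetween f g (Icc a b)) = ENNReal.ofReal (∫ x in a..b, g x - f x) := by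
  rw [← volume_closedRegionBetween_Ioc hab hf hg hfg, Measure.volume_eq_prod,
    volume_closedRegionBetween_eq_lintegral hf.measurable hg.measurable measurableSet_Icc,
    volume_closedRegionBetween_eq_lintegral hf.measurable hg.measurable measurableSet_Ioc,
    Measure.restrict_congr_set Ioc_ae_eq_Icc]

end closedRegionBetween

theorem volume_closedRegionBetween_Icc_union_Ioc {f₁ g₁ f₂ g₂ : ℝ → ℝ} {a b c : ℝ} (hab : a ≤ b)
    (hbc : b ≤ c) (hf₁ : Continuous f₁) (hg₁ : Continuous g₁) (hf₂ : Continuous f₂)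
    (hg₂ : Continuous g₂) (h₁ : ∀ x ∈ Icc a b, f₁ x ≤ g₁ x) (h₂ : ∀ x ∈ Icc b c, f₂ x ≤ g₂ x) :
    volume (closedRegionBetween f₁ g₁ (Icc a b) ∪ closedRegionBetween f₂ g₂ (Ioc b c)) =
      ENNReal.ofReal (∫ x in a..b, g₁ x - f₁ x) + ENNReal.ofReal (∫ x in b..c, g₂ x - f₂ x) := by
  have hdisj : Disjoint (closedRegionBetween f₁ g₁ (Icc a b))
      (closedRegionBetween f₂ g₂ (Ioc b c)) :=
    disjoint_left.2 fun p hp hq => hq.1.1.not_ge hp.1.2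
  rw [measure_union hdisj (measurableSet_region_between_cc hf₂.measurable hg₂.measurable
    measurableSet_Ioc), volume_closedRegionBetween_Icc hab hf₁ hg₁ h₁,
    volume_closedRegionBetween_Ioc hbc hf₂ hg₂ h₂]

theorem ENNReal.ofReal_div_two (a : ℝ) : ENNReal.ofReal (a / 2) = ENNReal.ofReal a / 2 := by
  rw [ENNReal.ofReal_div_of_pos two_pos, ENNReal.ofReal_ofNat]

theorem mem_add_segment {E : Type*} [AddCommGroup E] [Module ℝ E] {s : Set E} {P Q p : E} :
    p ∈ s + segment ℝ P Q ↔ ∃ t ∈ Icc (0 : ℝ) 1, p - AffineMap.lineMap P Q t ∈ s := by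
  simp only [segment_eq_image_lineMap, mem_add, mem_image]
  constructor
  · rintro ⟨a, ha, _, ⟨t, ht, rfl⟩, rfl⟩
    exact ⟨t, ht, by rwa [add_sub_cancel_right]⟩
  · rintro ⟨t, ht, hp⟩
    exact ⟨_, hp, _, ⟨t, ht, rfl⟩, sub_add_cancel p _⟩

theorem neg_vadd_set {E : Type*} [AddCommGroup E] (v : E) (s : Set E) : -(v +ᵥ s) = -v +ᵥ -s := by
  ext x
  simp only [mem_neg, mem_vadd_set_iff_neg_vadd_mem, vadd_eq_add, neg_neg, neg_add_rev, add_comm]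

theorem exists_neg_eq_singleton_iff {E : Type*} [InvolutiveNeg E] {s : Set E} :
    (∃ p, -s = {p}) ↔ ∃ p, s = {p} := by
  refine ⟨fun ⟨p, hp⟩ => ⟨-p, ?_⟩, fun ⟨p, hp⟩ => ⟨-p, by rw [hp, neg_singleton]⟩⟩
  rw [← neg_neg s, hp, neg_singleton]

theorem neg_vadd_convexHull_pair {E : Type*} [AddCommGroup E] [Module ℝ E] (v a b : E) :
    -(v +ᵥ convexHull ℝ {a, b}) = (-v - (a + b)) +ᵥ convexHull ℝ {a, b} := by
  rw [neg_vadd_set, ← convexHull_neg, neg_insert, neg_singleton, sub_eq_add_neg, ← vadd_vadd,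
    ← convexHull_vadd (-(a + b)), vadd_set_insert, vadd_set_singleton, pair_comm, vadd_eq_add,
    vadd_eq_add, show -(a + b) + a = -b by abel, show -(a + b) + b = -a by abel]

theorem mem_Δ₁ {p : ℝ × ℝ} : p ∈ Δ₁ ↔ 0 ≤ p.1 ∧ 0 ≤ p.2 ∧ p.1 + p.2 ≤ 1 := by
  refine ⟨fun hp => convexHull_min (t := {q : ℝ × ℝ | 0 ≤ q.1 ∧ 0 ≤ q.2 ∧ q.1 + q.2 ≤ 1}) ?_ ?_ hp,
    fun ⟨hx, hy, hxy⟩ => ?_⟩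
  · rintro q (rfl | rfl | rfl) <;> norm_num
  · rintro q ⟨hq₁, hq₂, hq₃⟩ r ⟨hr₁, hr₂, hr₃⟩ α β hα hβ hαβ
    simp only [mem_ofPred_eq, Prod.fst_add, Prod.snd_add, Prod.smul_fst, Prod.smul_snd,
      smul_eq_mul]
    exact ⟨by positivity, by positivity, by nlinarith⟩
  · rw [Δ₁]
    convert mem_convexHull_triple (by linarith) hx hy (by ring : 1 - p.1 - p.2 + p.1 + p.2 = 1)
    ext <;> simp

theorem preimage_swap_Δ₁ : Prod.swap ⁻¹' Δ₁ = Δ₁ := by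
  ext p
  simp only [mem_preimage, mem_Δ₁, Prod.fst_swap, Prod.snd_swap, add_comm p.2]
  tauto

theorem volume_Δ₁_add_preimage_swap (s : Set (ℝ × ℝ)) :
    volume (Δ₁ + Prod.swap ⁻¹' s) = volume (Δ₁ + s) := by
  rw [← volume_preimage_swap (Δ₁ + s), preimage_swap_add, preimage_swap_Δ₁]

theorem volume_Δ₁ : volume Δ₁ = 1 / 2 := by
  have : Δ₁ = closedRegionBetween (fun _ => 0) (fun x => 1 - x) (Icc 0 1) := by
    ext p
    simp only [mem_Δ₁, closedRegionBetween, mem_ofPred_eq, mem_Icc]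
    constructor
    · rintro ⟨h₁, h₂, h₃⟩; exact ⟨⟨h₁, by linarith⟩, h₂, by linarith⟩
    · rintro ⟨⟨h₁, -⟩, h₂, h₃⟩; exact ⟨h₁, h₂, by linarith⟩
  rw [this, volume_closedRegionBetween_Icc zero_le_one continuous_const (by fun_prop)
    fun x hx => by linarith [hx.2]]
  simp [intervalIntegral.integral_comp_sub_left (fun x => x)]

theorem volume_Δ₁_add_Δ₁ : volume (Δ₁ + Δ₁) = 2 := by
  rw [(show Convex ℝ Δ₁ from convex_convexHull ℝ _).addHaar_add_self volume, volume_Δ₁,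
    Module.finrank_prod, Module.finrank_self, pow_two, mul_one_div,
    ENNReal.mul_div_cancel_right two_ne_zero ENNReal.ofNat_ne_top]

theorem volume_Δ₁_add_vertical :
    volume (Δ₁ + convexHull ℝ {((0 : ℝ), (0 : ℝ)), ((0 : ℝ), (1 : ℝ))}) = 3 / 2 := by
  have : Δ₁ + convexHull ℝ {((0 : ℝ), (0 : ℝ)), ((0 : ℝ), (1 : ℝ))} =
      closedRegionBetween (fun _ => 0) (fun x => 2 - x) (Icc 0 1) := by
    ext ⟨x, y⟩
    simp only [convexHull_pair, mem_add_segment, mem_Δ₁, closedRegionBetween, mem_ofPred_eq,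
      mem_Icc, AffineMap.lineMap_apply_module, Prod.smul_mk, smul_eq_mul, mul_zero, mul_one,
      Prod.mk_add_mk, add_zero, zero_add, Prod.mk_sub_mk, sub_zero]
    constructor
    · rintro ⟨t, ⟨ht₀, ht₁⟩, h₁, h₂, h₃⟩
      exact ⟨⟨h₁, by linarith⟩, by linarith, by linarith⟩
    · rintro ⟨⟨h₁, h₂⟩, h₃, h₄⟩
      by_cases hxy : x + y ≤ 1
      · exact ⟨0, ⟨le_rfl, zero_le_one⟩, h₁, by linarith, by linarith⟩
      · exact ⟨x + y - 1, ⟨by linarith, by linarith⟩, h₁, by linarith, by linarith⟩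
  rw [this, volume_closedRegionBetween_Icc zero_le_one continuous_const (by fun_prop)
    fun x hx => by linarith [hx.2]]
  norm_num [intervalIntegral.integral_comp_sub_left (fun x => x), ENNReal.ofReal_div_two]

theorem volume_Δ₁_add_horizontal :
    volume (Δ₁ + convexHull ℝ {((0 : ℝ), (0 : ℝ)), ((1 : ℝ), (0 : ℝ))}) = 3 / 2 := by
  rw [← volume_Δ₁_add_preimage_swap, convexHull_pair, preimage_swap_segment]
  simpa [convexHull_pair] using volume_Δ₁_add_vertical

theorem volume_Δ₁_add_antidiagonal :
    volume (Δ₁ + convexHull ℝ {((1 : ℝ), (0 : ℝ)), ((0 : ℝ), (1 : ℝ))}) = 3 / 2 := by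
  have : Δ₁ + convexHull ℝ {((1 : ℝ), (0 : ℝ)), ((0 : ℝ), (1 : ℝ))} =
      closedRegionBetween (fun x => 1 - x) (fun x => 2 - x) (Icc 0 1) ∪
        closedRegionBetween (fun _ => 0) (fun x => 2 - x) (Ioc 1 2) := by
    ext ⟨x, y⟩
    simp only [convexHull_pair, mem_add_segment, mem_Δ₁, closedRegionBetween, mem_union,
      mem_ofPred_eq, mem_Icc, mem_Ioc, AffineMap.lineMap_apply_module, Prod.smul_mk, smul_eq_mul,
      mul_one, mul_zero, Prod.mk_add_mk, add_zero, zero_add, Prod.mk_sub_mk]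
    constructor
    · rintro ⟨t, ⟨ht₀, ht₁⟩, h₁, h₂, h₃⟩
      by_cases hx : x ≤ 1
      · exact Or.inl ⟨⟨by linarith, hx⟩, by linarith, by linarith⟩
      · exact Or.inr ⟨⟨by linarith, by linarith⟩, by linarith, by linarith⟩
    · rintro (⟨⟨h₁, h₂⟩, h₃, h₄⟩ | ⟨⟨h₁, h₂⟩, h₃, h₄⟩)
      · exact ⟨1 - x, ⟨by linarith, by linarith⟩, by linarith, by linarith, by linarith⟩
      · exact ⟨0, ⟨le_rfl, zero_le_one⟩, by linarith, by linarith, by linarith⟩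
  rw [this, volume_closedRegionBetween_Icc_union_Ioc zero_le_one one_le_two (by fun_prop)
    (by fun_prop) (by fun_prop) (by fun_prop) (fun x _ => by linarith)
    fun x hx => by linarith [hx.2]]
  simp only [sub_sub_sub_cancel_right, intervalIntegral.integral_const, smul_eq_mul, sub_zero,
    intervalIntegral.integral_comp_sub_left (fun x => x), integral_id]
  rw [← ENNReal.ofReal_add (by norm_num) (by norm_num)]
  norm_num [ENNReal.ofReal_div_two]

theorem five_half_le_volume_Δ₁_add_segment_of_fst {P Q : ℝ × ℝ} (h : P.1 + 2 ≤ Q.1) :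
    5 / 2 ≤ volume (Δ₁ + segment ℝ P Q) := by
  obtain ⟨a, b⟩ := P
  obtain ⟨c, d⟩ := Q
  dsimp only at h
  have hac : 0 < c - a := by linarith
  set L : ℝ → ℝ := fun x => b + (d - b) / (c - a) * (x - a)
  -- the parallelogram `[P, Q] + [0, (0, 1)]`, then the part of `Q + Δ₁` to the right of `Q`
  have hsub : closedRegionBetween L (fun x => L x + 1) (Icc a c) ∪
      closedRegionBetween (fun _ => d) (fun x => d + (c + 1 - x)) (Ioc c (c + 1)) ⊆
        Δ₁ + segment ℝ (a, b) (c, d) := by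
    rintro ⟨x, y⟩ (⟨⟨h₁, h₂⟩, h₃, h₄⟩ | ⟨⟨h₁, h₂⟩, h₃, h₄⟩) <;> rw [mem_add_segment]
    · refine ⟨(x - a) / (c - a), ⟨by positivity, (div_le_one hac).2 (by linarith)⟩, ?_⟩
      have hx : (1 - (x - a) / (c - a)) * a + (x - a) / (c - a) * c = x := by
        field_simp; ring
      have hy : (1 - (x - a) / (c - a)) * b + (x - a) / (c - a) * d = L x := by
        simp only [L]; field_simp; ring
      simp only [AffineMap.lineMap_apply_module, Prod.smul_mk, smul_eq_mul, Prod.mk_add_mk,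
        Prod.mk_sub_mk, hx, hy, mem_Δ₁]
      exact ⟨(sub_self x).ge, by linarith, by linarith⟩
    · refine ⟨1, ⟨zero_le_one, le_rfl⟩, ?_⟩
      simp only [AffineMap.lineMap_apply_one, Prod.mk_sub_mk, mem_Δ₁]
      exact ⟨by linarith, by linarith, by linarith⟩
  calc (5 / 2 : ℝ≥0∞) ≤ ENNReal.ofReal (c - a) + ENNReal.ofReal (1 / 2) := by
        rw [← ENNReal.ofReal_add hac.le (by norm_num), ← ENNReal.ofReal_ofNat 5,
          ← ENNReal.ofReal_div_two]
        exact ENNReal.ofReal_le_ofReal (by linarith)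
    _ = volume (closedRegionBetween L (fun x => L x + 1) (Icc a c) ∪
          closedRegionBetween (fun _ => d) (fun x => d + (c + 1 - x)) (Ioc c (c + 1))) := by
        rw [volume_closedRegionBetween_Icc_union_Ioc (by linarith) (by linarith) (by fun_prop)
          (by fun_prop) (by fun_prop) (by fun_prop) (fun x _ => by linarith)
          fun x hx => by linarith [hx.2]]
        simp [intervalIntegral.integral_comp_sub_left (fun x => x)]
    _ ≤ volume (Δ₁ + segment ℝ (a, b) (c, d)) := measure_mono hsub

theorem five_half_le_volume_Δ₁_add_segment_of_snd {P Q : ℝ × ℝ} (h : P.2 + 2 ≤ Q.2) :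
    5 / 2 ≤ volume (Δ₁ + segment ℝ P Q) := by
  rw [← volume_Δ₁_add_preimage_swap, preimage_swap_segment]
  exact five_half_le_volume_Δ₁_add_segment_of_fst h

theorem five_half_le_volume_Δ₁_add_segment_diagonal (P : ℝ × ℝ) :
    5 / 2 ≤ volume (Δ₁ + segment ℝ P (P + (1, 1))) := by
  have : segment ℝ P (P + (1, 1)) = P +ᵥ segment ℝ (0 : ℝ × ℝ) (1, 1) := by
    rw [vadd_segment, vadd_eq_add, vadd_eq_add, add_zero]
  rw [this, add_vadd_comm, measure_vadd]
  -- `Δ₁ + [0, (1, 1)]` is the pentagon with vertices `(0,0), (1,0), (2,1), (1,2), (0,1)`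
  have hsub : closedRegionBetween (fun _ => 0) (fun x => x + 1) (Icc 0 1) ∪
      closedRegionBetween (fun x => x - 1) (fun x => 3 - x) (Ioc 1 2) ⊆
        Δ₁ + segment ℝ 0 (1, 1) := by
    rintro ⟨x, y⟩ (⟨⟨h₁, h₂⟩, h₃, h₄⟩ | ⟨⟨h₁, h₂⟩, h₃, h₄⟩) <;> rw [mem_add_segment] <;>
      simp only [AffineMap.lineMap_apply_module, smul_zero, zero_add, Prod.smul_mk, smul_eq_mul,
        mul_one, Prod.mk_sub_mk, mem_Δ₁]
    · by_cases hxy : y ≤ x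
      · exact ⟨y, ⟨h₃, by linarith⟩, by linarith, by linarith, by linarith⟩
      · exact ⟨x, ⟨h₁, h₂⟩, by linarith, by linarith, by linarith⟩
    · by_cases hy : y ≤ 1
      · exact ⟨y, ⟨by linarith, hy⟩, by linarith, by linarith, by linarith⟩
      · exact ⟨1, ⟨zero_le_one, le_rfl⟩, by linarith, by linarith, by linarith⟩
  calc (5 / 2 : ℝ≥0∞) = ENNReal.ofReal (3 / 2) + ENNReal.ofReal 1 := by
        rw [← ENNReal.ofReal_add (by norm_num) (by norm_num)]
        norm_num [ENNReal.ofReal_div_two]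
    _ = volume (closedRegionBetween (fun _ => 0) (fun x => x + 1) (Icc 0 1) ∪
          closedRegionBetween (fun x => x - 1) (fun x => 3 - x) (Ioc 1 2)) := by
        rw [volume_closedRegionBetween_Icc_union_Ioc zero_le_one one_le_two (by fun_prop)
          (by fun_prop) (by fun_prop) (by fun_prop) (fun x hx => by linarith [hx.1])
          fun x hx => by linarith [hx.2]]
        have : ∀ x : ℝ, 3 - x - (x - 1) = 2 * (2 - x) := fun x => by ring
        norm_num [this, intervalIntegral.integral_comp_sub_left (fun x => x)]
    _ ≤ volume (Δ₁ + segment ℝ 0 (1, 1)) := measure_mono hsub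

theorem five_half_le_volume_Δ₁_add_segment {P Q : ℝ × ℝ}
    (h : P.1 + 2 ≤ Q.1 ∨ P.2 + 2 ≤ Q.2 ∨ Q = P + (1, 1)) :
    5 / 2 ≤ volume (Δ₁ + segment ℝ P Q) := by
  rcases h with h | h | rfl
  exacts [five_half_le_volume_Δ₁_add_segment_of_fst h, five_half_le_volume_Δ₁_add_segment_of_snd h,
    five_half_le_volume_Δ₁_add_segment_diagonal P]

theorem volume_Δ₁_add_of_isUnitSegmentTranslate {Δ : Set (ℝ × ℝ)}
    (h : IsUnitSegmentTranslate Δ) : volume (Δ₁ + Δ) = 3 / 2 := by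
  obtain ⟨v, rfl | rfl | rfl⟩ := h <;> rw [add_vadd_comm, measure_vadd]
  exacts [volume_Δ₁_add_horizontal, volume_Δ₁_add_vertical, volume_Δ₁_add_antidiagonal]

theorem Δ₂_eq_vadd_neg_Δ₁ : Δ₂ = ((1 : ℝ), (1 : ℝ)) +ᵥ -Δ₁ := by
  rw [Δ₁, ← convexHull_neg, ← convexHull_vadd, Δ₂]
  congr 1
  simp only [neg_insert, neg_singleton, vadd_set_insert, vadd_set_singleton]
  norm_num [insert_comm, pair_comm]

theorem mem_Δ₂ {p : ℝ × ℝ} : p ∈ Δ₂ ↔ p.1 ≤ 1 ∧ p.2 ≤ 1 ∧ 1 ≤ p.1 + p.2 := by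
  rw [Δ₂_eq_vadd_neg_Δ₁, mem_vadd_set_iff_neg_vadd_mem, mem_neg, mem_Δ₁]
  simp only [vadd_eq_add, neg_add_rev, neg_neg, Prod.fst_add, Prod.snd_add, Prod.fst_neg,
    Prod.snd_neg]
  constructor <;> rintro ⟨h₁, h₂, h₃⟩ <;> exact ⟨by linarith, by linarith, by linarith⟩

theorem five_half_le_volume_Δ₁_add_Δ₂ : 5 / 2 ≤ volume (Δ₁ + Δ₂) := by
  have hsub : closedRegionBetween (fun x => 1 - x) (fun _ => 2) (Icc 0 1) ∪
      closedRegionBetween (fun _ => 0) (fun _ => 1) (Ioc 1 2) ⊆ Δ₁ + Δ₂ := by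
    rintro ⟨x, y⟩ (⟨⟨h₁, h₂⟩, h₃, h₄⟩ | ⟨⟨h₁, h₂⟩, h₃, h₄⟩)
    · by_cases hy : y ≤ 1
      · exact ⟨0, mem_Δ₁.2 ⟨le_rfl, le_rfl, by norm_num⟩, (x, y),
          mem_Δ₂.2 ⟨h₂, hy, by linarith⟩, zero_add _⟩
      · exact ⟨(0, y - 1), mem_Δ₁.2 ⟨le_rfl, by linarith, by linarith⟩, (x, 1),
          mem_Δ₂.2 ⟨h₂, le_rfl, by linarith⟩, by simp⟩
    · exact ⟨(x - 1, 0), mem_Δ₁.2 ⟨by linarith, le_rfl, by linarith⟩, (1, y),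
        mem_Δ₂.2 ⟨le_rfl, h₄, by linarith⟩, by simp⟩
  calc (5 / 2 : ℝ≥0∞) = ENNReal.ofReal (3 / 2) + ENNReal.ofReal 1 := by
        rw [← ENNReal.ofReal_add (by norm_num) (by norm_num)]
        norm_num [ENNReal.ofReal_div_two]
    _ = volume (closedRegionBetween (fun x => 1 - x) (fun _ => 2) (Icc 0 1) ∪
          closedRegionBetween (fun _ => 0) (fun _ => 1) (Ioc 1 2)) := by
        rw [volume_closedRegionBetween_Icc_union_Ioc zero_le_one one_le_two (by fun_prop)
          (by fun_prop) (by fun_prop) (by fun_prop) (fun x hx => by linarith [hx.1])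
          fun x _ => zero_le_one]
        norm_num [intervalIntegral.integral_comp_sub_left (fun x => x)]
    _ ≤ volume (Δ₁ + Δ₂) := measure_mono hsub

theorem volume_Δ₂_add (s : Set (ℝ × ℝ)) : volume (Δ₂ + s) = volume (Δ₁ + -s) := by
  rw [add_comm, Δ₂_eq_vadd_neg_Δ₁, add_vadd_comm, measure_vadd, ← Measure.measure_neg, neg_add,
    neg_neg, add_comm]

theorem exists_vadd_Δ₂_iff {Δ : Set (ℝ × ℝ)} :
    (∃ v : ℝ × ℝ, Δ = v +ᵥ Δ₂) ↔ ∃ v : ℝ × ℝ, -Δ = v +ᵥ Δ₁ := by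
  simp only [Δ₂_eq_vadd_neg_Δ₁, vadd_vadd]
  constructor
  · rintro ⟨v, rfl⟩
    exact ⟨-(v + (1, 1)), by rw [neg_vadd_set, neg_neg]⟩
  · rintro ⟨v, hv⟩
    exact ⟨-v - (1, 1), by rw [sub_add_cancel, ← neg_vadd_set, ← hv, neg_neg]⟩

theorem IsUnitSegmentTranslate.vadd {Δ : Set (ℝ × ℝ)} (h : IsUnitSegmentTranslate Δ)
    (w : ℝ × ℝ) : IsUnitSegmentTranslate (w +ᵥ Δ) := by
  obtain ⟨v, rfl | rfl | rfl⟩ := h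
  exacts [⟨w + v, Or.inl (vadd_vadd w v _)⟩, ⟨w + v, Or.inr (Or.inl (vadd_vadd w v _))⟩,
    ⟨w + v, Or.inr (Or.inr (vadd_vadd w v _))⟩]

theorem IsUnitSegmentTranslate.neg {Δ : Set (ℝ × ℝ)} (h : IsUnitSegmentTranslate Δ) :
    IsUnitSegmentTranslate (-Δ) := by
  obtain ⟨v, rfl | rfl | rfl⟩ := h <;> rw [neg_vadd_convexHull_pair]
  exacts [⟨_, Or.inl rfl⟩, ⟨_, Or.inr (Or.inl rfl)⟩, ⟨_, Or.inr (Or.inr rfl)⟩]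

theorem isUnitSegmentTranslate_neg_iff {Δ : Set (ℝ × ℝ)} :
    IsUnitSegmentTranslate (-Δ) ↔ IsUnitSegmentTranslate Δ :=
  ⟨fun h => neg_neg Δ ▸ h.neg, .neg⟩

theorem AreaTrichotomy.Δ₂_of_neg {Δ : Set (ℝ × ℝ)} (h : AreaTrichotomy Δ₁ (-Δ)) :
    AreaTrichotomy Δ₂ Δ := by
  simpa only [AreaTrichotomy, volume_Δ₂_add, isUnitSegmentTranslate_neg_iff,
    exists_vadd_Δ₂_iff] using h

def latticePolygon (T : Finset (ℤ × ℤ)) : Set (ℝ × ℝ) :=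
  convexHull ℝ ((fun p : ℤ × ℤ => ((p.1 : ℝ), (p.2 : ℝ))) '' (T : Set (ℤ × ℤ)))

theorem latticePolygon_image_neg (T : Finset (ℤ × ℤ)) :
    latticePolygon (T.image Neg.neg) = -latticePolygon T := by
  rw [latticePolygon, latticePolygon, ← convexHull_neg, Finset.coe_image, image_image,
    ← image_neg_eq_neg, image_image]
  simp

theorem convexHull_cases_of_subset {s : Set (ℝ × ℝ)}
    (hs : s ⊆ {((0 : ℝ), (0 : ℝ)), ((1 : ℝ), (0 : ℝ)), ((0 : ℝ), (1 : ℝ))}) (hne : s.Nonempty) :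
    (∃ p, convexHull ℝ s = {p}) ∨ IsUnitSegmentTranslate (convexHull ℝ s) ∨
      convexHull ℝ s = Δ₁ := by
  rw [← inter_eq_right.2 hs] at hne ⊢
  by_cases h₁ : ((0 : ℝ), (0 : ℝ)) ∈ s <;> by_cases h₂ : ((1 : ℝ), (0 : ℝ)) ∈ s <;>
    by_cases h₃ : ((0 : ℝ), (1 : ℝ)) ∈ s <;>
    simp only [insert_inter_of_mem, insert_inter_of_notMem, singleton_inter_of_mem,
      singleton_inter_of_notMem, insert_empty_eq, convexHull_singleton, h₁, h₂, h₃,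
      not_false_eq_true] at hne ⊢
  · exact Or.inr (Or.inr rfl)
  · exact Or.inr (Or.inl ⟨0, Or.inl (zero_vadd _ _).symm⟩)
  · exact Or.inr (Or.inl ⟨0, Or.inr (Or.inl (zero_vadd _ _).symm)⟩)
  · exact Or.inl ⟨_, rfl⟩
  · exact Or.inr (Or.inl ⟨0, Or.inr (Or.inr (zero_vadd _ _).symm)⟩)
  · exact Or.inl ⟨_, rfl⟩
  · exact Or.inl ⟨_, rfl⟩
  · exact absurd hne not_nonempty_empty

theorem latticePolygon_cases {T : Finset (ℤ × ℤ)} (hT : T.Nonempty) {v : ℤ × ℤ}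
    (hv : ∀ t ∈ T, v.1 ≤ t.1 ∧ v.2 ≤ t.2 ∧ t.1 + t.2 ≤ v.1 + v.2 + 1) :
    (∃ p, latticePolygon T = {p}) ∨ IsUnitSegmentTranslate (latticePolygon T) ∨
      ∃ w : ℝ × ℝ, latticePolygon T = w +ᵥ Δ₁ := by
  set w : ℝ × ℝ := (v.1, v.2)
  set s := -w +ᵥ (fun p : ℤ × ℤ => ((p.1 : ℝ), (p.2 : ℝ))) '' (T : Set (ℤ × ℤ))
  have hlat : latticePolygon T = w +ᵥ convexHull ℝ s := by
    rw [← convexHull_vadd, vadd_neg_vadd]; rfl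
  have hs : s ⊆ {((0 : ℝ), (0 : ℝ)), ((1 : ℝ), (0 : ℝ)), ((0 : ℝ), (1 : ℝ))} := by
    rintro _ ⟨_, ⟨t, ht, rfl⟩, rfl⟩
    have := hv t ht
    rcases (by omega : (t.1 = v.1 ∧ t.2 = v.2) ∨ (t.1 = v.1 + 1 ∧ t.2 = v.2) ∨
      (t.1 = v.1 ∧ t.2 = v.2 + 1)) with ⟨h₁, h₂⟩ | ⟨h₁, h₂⟩ | ⟨h₁, h₂⟩ <;> simp [w, h₁, h₂]
  rw [hlat]
  rcases convexHull_cases_of_subset hs (hT.to_set.image _).vadd_set with ⟨p, hp⟩ | h | h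
  · exact Or.inl ⟨w +ᵥ p, by rw [hp, vadd_set_singleton]⟩
  · exact Or.inr (Or.inl (h.vadd w))
  · exact Or.inr (Or.inr ⟨w, by rw [h]⟩)

theorem exists_long_pair_or_unitTriangle {T : Finset (ℤ × ℤ)} (hT : T.Nonempty) :
    (∃ p ∈ T, ∃ q ∈ T, p.1 + 2 ≤ q.1 ∨ p.2 + 2 ≤ q.2 ∨ q = p + (1, 1)) ∨
      ∃ v : ℤ × ℤ, (∀ t ∈ T, v.1 ≤ t.1 ∧ v.2 ≤ t.2 ∧ t.1 + t.2 ≤ v.1 + v.2 + 1) ∨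
        ∀ t ∈ T, t.1 ≤ v.1 ∧ t.2 ≤ v.2 ∧ v.1 + v.2 ≤ t.1 + t.2 + 1 := by
  refine or_iff_not_imp_left.2 fun hlong => ?_
  simp only [not_exists, not_and, not_or, Prod.ext_iff, Prod.fst_add, Prod.snd_add] at hlong
  -- `T` lies in the unit square at the minimal coordinates and, having no difference `(1, 1)`,
  -- misses one of its two corners on the diagonal
  obtain ⟨p₁, hp₁, hmin₁⟩ := T.exists_min_image Prod.fst hT
  obtain ⟨p₂, hp₂, hmin₂⟩ := T.exists_min_image Prod.snd hT
  by_cases hcorner : (p₁.1 + 1, p₂.2 + 1) ∈ T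
  · refine ⟨(p₁.1 + 1, p₂.2 + 1), Or.inr fun t ht => ?_⟩
    have := hlong t ht _ hcorner
    have := hlong p₁ hp₁ t ht
    have := hlong p₂ hp₂ t ht
    have := hmin₁ t ht
    have := hmin₂ t ht
    dsimp only at *
    omega
  · refine ⟨(p₁.1, p₂.2), Or.inl fun t ht => ?_⟩
    have := hlong p₁ hp₁ t ht
    have := hlong p₂ hp₂ t ht
    have := hmin₁ t ht
    have := hmin₂ t ht
    have : t ≠ (p₁.1 + 1, p₂.2 + 1) := fun h => hcorner (h ▸ ht)
    simp only [ne_eq, Prod.ext_iff] at *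
    omega

theorem five_half_le_volume_Δ₁_add_latticePolygon {T : Finset (ℤ × ℤ)} (hT : T.Nonempty)
    (hpt : ¬∃ p, latticePolygon T = {p}) (hseg : ¬IsUnitSegmentTranslate (latticePolygon T))
    (htri : ¬∃ v : ℝ × ℝ, latticePolygon T = v +ᵥ Δ₁) :
    5 / 2 ≤ volume (Δ₁ + latticePolygon T) := by
  rcases exists_long_pair_or_unitTriangle hT with ⟨p, hp, q, hq, hpq⟩ | ⟨v, hv | hv⟩
  · have hsub : segment ℝ ((p.1 : ℝ), (p.2 : ℝ)) (q.1, q.2) ⊆ latticePolygon T :=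
      segment_subset_convexHull (mem_image_of_mem _ hp) (mem_image_of_mem _ hq)
    refine (five_half_le_volume_Δ₁_add_segment ?_).trans (measure_mono (add_subset_add_left hsub))
    rcases hpq with h | h | rfl
    · exact Or.inl (by dsimp only; exact_mod_cast h)
    · exact Or.inr (Or.inl (by dsimp only; exact_mod_cast h))
    · exact Or.inr (Or.inr (by simp))
  · rcases latticePolygon_cases hT hv with h | h | h
    exacts [absurd h hpt, absurd h hseg, absurd h htri]
  · have hv' : ∀ t ∈ T.image Neg.neg,
        (-v).1 ≤ t.1 ∧ (-v).2 ≤ t.2 ∧ t.1 + t.2 ≤ (-v).1 + (-v).2 + 1 := by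
      simp only [Finset.forall_mem_image, Prod.fst_neg, Prod.snd_neg]
      intro t ht
      have := hv t ht
      omega
    rcases latticePolygon_cases (hT.image _) hv' with h | h | h <;>
      rw [latticePolygon_image_neg] at h
    · exact absurd (exists_neg_eq_singleton_iff.1 h) hpt
    · exact absurd (isUnitSegmentTranslate_neg_iff.1 h) hseg
    · obtain ⟨u, hu⟩ := exists_vadd_Δ₂_iff.2 h
      rw [hu, add_vadd_comm, measure_vadd]
      exact five_half_le_volume_Δ₁_add_Δ₂

theorem areaTrichotomy_Δ₁_latticePolygon {T : Finset (ℤ × ℤ)} (hT : T.Nonempty)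
    (hpt : ¬∃ p, latticePolygon T = {p}) : AreaTrichotomy Δ₁ (latticePolygon T) :=
  ⟨volume_Δ₁_add_of_isUnitSegmentTranslate,
    fun ⟨v, hv⟩ => by rw [hv, add_vadd_comm, measure_vadd, volume_Δ₁_add_Δ₁],
    five_half_le_volume_Δ₁_add_latticePolygon hT hpt⟩

/-- **Area of the Minkowski sum of a unit triangle with a lattice polytope** (Lemma
`area2` of the paper): for `Δ = conv(T)` a lattice polytope which is not a point, the
area of `Δᵢ + Δ` is `3/2` if `Δ` is a unit lattice segment (up to translation), `2` if
`Δ` is a translate of `Δᵢ`, and at least `5/2` otherwise. -/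
theorem area_minkowski_sum_unit_triangle (T : Finset (ℤ × ℤ)) (hT : T.Nonempty)
    (Δ : Set (ℝ × ℝ))
    (hΔ : Δ = convexHull ℝ ((fun p : ℤ × ℤ => ((p.1 : ℝ), (p.2 : ℝ))) '' (T : Set (ℤ × ℤ))))
    (hpt : ¬ ∃ p, Δ = {p}) :
    AreaTrichotomy Δ₁ Δ ∧ AreaTrichotomy Δ₂ Δ := by
  change Δ = latticePolygon T at hΔ
  subst hΔ
  refine ⟨areaTrichotomy_Δ₁_latticePolygon hT hpt, .Δ₂_of_neg ?_⟩
  rw [← latticePolygon_image_neg]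
  refine areaTrichotomy_Δ₁_latticePolygon (hT.image _) ?_
  rwa [latticePolygon_image_neg, exists_neg_eq_singleton_iff]
end

section
/- Let Δ₁ = conv{(0,0),(1,0),(0,1)} and Δ₂ = conv{(1,0),(0,1),(1,1)} in ℝ², let T ⊂ ℤ² be a finite nonempty set, and let Δ = conv(T); assume Δ is not a single point. Then there exists a vector v ∈ ℝ² such that the area of (Δ₁ + Δ) ∩ (v + (Δ₂ + Δ)) is at least 1. -/
open scoped Pointwise
open MeasureTheory

lemma seg_add_seg (p q u w : ℝ × ℝ) :
    segment ℝ p (p + u) + segment ℝ q (q + w) =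
      (p + q) +ᵥ ((fun x : ℝ × ℝ => x.1 • u + x.2 • w) ''
        (Set.Icc (0:ℝ) 1 ×ˢ Set.Icc (0:ℝ) 1)) := by
  ext z
  constructor
  · rintro ⟨x, hx, y, hy, rfl⟩
    rw [segment_eq_image'] at hx hy
    obtain ⟨s, hs, rfl⟩ := hx
    obtain ⟨t, ht, rfl⟩ := hy
    refine Set.mem_vadd_set.mpr ⟨s • u + t • w, ⟨(s, t), ⟨hs, ht⟩, rfl⟩, ?_⟩
    simp only [add_sub_cancel_left, vadd_eq_add]
    abel
  · rintro ⟨_, ⟨⟨s, t⟩, ⟨hs, ht⟩, rfl⟩, rfl⟩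
    refine ⟨p + s • u, ?_, q + t • w, ?_, ?_⟩
    · rw [segment_eq_image']; exact ⟨s, hs, by simp⟩
    · rw [segment_eq_image']; exact ⟨t, ht, by simp⟩
    · simp only [vadd_eq_add]; abel

lemma vol_par (u w : ℝ × ℝ) :
    volume ((fun x : ℝ × ℝ => x.1 • u + x.2 • w) ''
        (Set.Icc (0:ℝ) 1 ×ˢ Set.Icc (0:ℝ) 1)) =
      ENNReal.ofReal |u.1 * w.2 - u.2 * w.1| := by
  set f : ℝ × ℝ →ₗ[ℝ] ℝ × ℝ :=
    Matrix.toLin (Module.Basis.finTwoProd ℝ) (Module.Basis.finTwoProd ℝ) !![u.1, w.1; u.2, w.2] with hfdef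
  have hf : (fun x : ℝ × ℝ => x.1 • u + x.2 • w) = f := by
    funext x
    rw [hfdef, Matrix.toLin_finTwoProd_apply]
    simp only [Prod.ext_iff, Prod.fst_add, Prod.snd_add, Prod.smul_fst, Prod.smul_snd,
      smul_eq_mul]
    constructor <;> ring
  have hdet : LinearMap.det f = u.1 * w.2 - u.2 * w.1 := by
    rw [hfdef, LinearMap.det_toLin, Matrix.det_fin_two_of]
    ring
  rw [hf, Measure.addHaar_image_linearMap, hdet]
  have hv : volume (Set.Icc (0:ℝ) 1 ×ˢ Set.Icc (0:ℝ) 1) = 1 := by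
    rw [Measure.volume_eq_prod, Measure.prod_prod, Real.volume_Icc]
    norm_num
  rw [hv, mul_one]

lemma seg_sum_subset {A B : Set (ℝ × ℝ)} {x y a b : ℝ × ℝ}
    (hx : x ∈ A) (hy : y ∈ A) (ha : a ∈ B) (hb : b ∈ B)
    (hA : Convex ℝ A) (hB : Convex ℝ B) :
    segment ℝ x y + segment ℝ a b ⊆ A + B :=
  Set.add_subset_add (hA.segment_subset hx hy) (hB.segment_subset ha hb)

lemma subset_vadd_of_subset {v : ℝ × ℝ} {S C D : Set (ℝ × ℝ)}
    (h : (-v) +ᵥ S ⊆ C + D) : S ⊆ v +ᵥ (C + D) := by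
  intro z hz
  refine Set.mem_vadd_set.mpr ⟨(-v) + z, h ⟨z, hz, rfl⟩, by simp⟩

lemma vadd_seg (v x y : ℝ × ℝ) :
    v +ᵥ segment ℝ x y = segment ℝ (v + x) (v + y) := by
  ext z
  rw [Set.mem_vadd_set]
  constructor
  · rintro ⟨b, hb, rfl⟩
    rw [segment_eq_image'] at hb ⊢
    obtain ⟨t, ht, rfl⟩ := hb
    exact ⟨t, ht, by simp [vadd_eq_add]; abel⟩
  · intro hz
    rw [segment_eq_image'] at hz
    obtain ⟨t, ht, rfl⟩ := hz
    refine ⟨x + t • (y - x), ?_, by simp [vadd_eq_add]; abel⟩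
    rw [segment_eq_image']
    exact ⟨t, ht, rfl⟩

/-- **The overlap lemma** (Lemma `caparea` of the paper): for a lattice polytope
`Δ = conv(T)` which is not a point, some translate of `Δ₂ + Δ` meets `Δ₁ + Δ` in a set
of area at least `1`. -/
theorem overlap_area_ge_one (T : Finset (ℤ × ℤ)) (hT : T.Nonempty)
    (Δ : Set (ℝ × ℝ))
    (hΔ : Δ = convexHull ℝ ((fun p : ℤ × ℤ => ((p.1 : ℝ), (p.2 : ℝ))) '' (T : Set (ℤ × ℤ))))
    (hpt : ¬ ∃ p, Δ = {p}) :
    ∃ v : ℝ × ℝ, 1 ≤ volume ((Δ₁ + Δ) ∩ (v +ᵥ (Δ₂ + Δ))) := by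
  classical
  obtain ⟨p₀, hp₀⟩ := hT
  set φ : ℤ × ℤ → ℝ × ℝ := fun p => ((p.1 : ℝ), (p.2 : ℝ)) with hφ
  -- find a second point with different image
  have hq : ∃ q ∈ T, φ q ≠ φ p₀ := by
    by_contra h
    push_neg at h
    apply hpt
    refine ⟨φ p₀, ?_⟩
    rw [hΔ]
    have : φ '' (T : Set (ℤ × ℤ)) = {φ p₀} := by
      apply Set.eq_singleton_iff_nonempty_unique_mem.mpr
      exact ⟨⟨φ p₀, ⟨p₀, hp₀, rfl⟩⟩, by rintro _ ⟨q, hqT, rfl⟩; exact h q hqT⟩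
    rw [this, convexHull_singleton]
  obtain ⟨q, hqT, hqne⟩ := hq
  set a : ℝ × ℝ := φ p₀ with ha
  set d : ℝ × ℝ := φ q - φ p₀ with hd
  have haΔ : a ∈ Δ := by
    rw [hΔ]; exact subset_convexHull ℝ _ ⟨p₀, hp₀, rfl⟩
  have hadΔ : a + d ∈ Δ := by
    have had : a + d = φ q := by rw [ha, hd]; abel
    rw [had, hΔ]
    exact subset_convexHull ℝ _ ⟨q, hqT, rfl⟩
  have hΔconv : Convex ℝ Δ := by rw [hΔ]; exact convex_convexHull ℝ _
  set m : ℤ := q.1 - p₀.1 with hm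
  set n : ℤ := q.2 - p₀.2 with hn
  have hd1 : d.1 = (m : ℝ) := by simp [hd, hφ, hm]
  have hd2 : d.2 = (n : ℝ) := by simp [hd, hφ, hn]
  have hmn : ¬(m = 0 ∧ n = 0) := by
    rintro ⟨h1, h2⟩
    apply hqne
    have e1 : q.1 = p₀.1 := by omega
    have e2 : q.2 = p₀.2 := by omega
    simp [hφ, ha, Prod.ext_iff, e1, e2]
  -- the general argument, parametrized by the choice of edge and translation
  have key : ∀ (v x y : ℝ × ℝ) (u : ℝ × ℝ), y = x + u →
      x ∈ Δ₁ → y ∈ Δ₁ → (-v) + x ∈ Δ₂ → (-v) + y ∈ Δ₂ →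
      1 ≤ |u.1 * d.2 - u.2 * d.1| →
      1 ≤ volume ((Δ₁ + Δ) ∩ (v +ᵥ (Δ₂ + Δ))) := by
    intro v x y u hyx hx1 hy1 hx2 hy2 hdet
    set S : Set (ℝ × ℝ) := segment ℝ x y + segment ℝ a (a + d) with hS
    have hΔ₁conv : Convex ℝ Δ₁ := by unfold Δ₁; exact convex_convexHull ℝ _
    have hΔ₂conv : Convex ℝ Δ₂ := by unfold Δ₂; exact convex_convexHull ℝ _
    have hS1 : S ⊆ Δ₁ + Δ :=
      seg_sum_subset hx1 hy1 haΔ hadΔ hΔ₁conv hΔconv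
    have hS2 : S ⊆ v +ᵥ (Δ₂ + Δ) := by
      apply subset_vadd_of_subset
      have : (-v) +ᵥ S = segment ℝ ((-v) + x) ((-v) + y) + segment ℝ a (a + d) := by
        rw [hS]
        ext z
        rw [Set.mem_vadd_set]
        constructor
        · rintro ⟨b, ⟨b₁, hb₁, b₂, hb₂, rfl⟩, rfl⟩
          refine ⟨(-v) + b₁, ?_, b₂, hb₂, by simp [vadd_eq_add]; abel⟩
          rw [← vadd_seg]
          exact ⟨b₁, hb₁, rfl⟩
        · rintro ⟨b₁, hb₁, b₂, hb₂, rfl⟩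
          rw [← vadd_seg] at hb₁
          obtain ⟨c₁, hc₁, rfl⟩ := hb₁
          exact ⟨c₁ + b₂, ⟨c₁, hc₁, b₂, hb₂, rfl⟩, by simp [vadd_eq_add]; abel⟩
      rw [this]
      exact seg_sum_subset hx2 hy2 haΔ hadΔ hΔ₂conv hΔconv
    have hvol : volume S = ENNReal.ofReal |u.1 * d.2 - u.2 * d.1| := by
      rw [hS, hyx, seg_add_seg, measure_vadd, vol_par]
    refine le_trans ?_ (measure_mono (Set.subset_inter hS1 hS2))
    rw [hvol]
    rw [show (1 : ENNReal) = ENNReal.ofReal 1 by simp]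
    exact ENNReal.ofReal_le_ofReal hdet
  by_cases hc : m + n = 0
  · -- use horizontal edge, v = (0,-1); here n = -m, m ≠ 0
    have hm0 : m ≠ 0 := by
      intro h; exact hmn ⟨h, by omega⟩
    refine ⟨((0 : ℝ), (-1 : ℝ)), key _ ((0:ℝ),(0:ℝ)) ((1:ℝ),(0:ℝ)) ((1:ℝ),(0:ℝ)) (by norm_num [Prod.ext_iff])
      ?_ ?_ ?_ ?_ ?_⟩
    · exact subset_convexHull ℝ _ (by norm_num [Prod.ext_iff])
    · exact subset_convexHull ℝ _ (by norm_num [Prod.ext_iff])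
    · show _ ∈ Δ₂
      exact subset_convexHull ℝ _ (by norm_num [Prod.ext_iff])
    · show _ ∈ Δ₂
      exact subset_convexHull ℝ _ (by norm_num [Prod.ext_iff])
    · simp only [hd1, hd2]
      rw [show (1:ℝ) * (n:ℝ) - 0 * (m:ℝ) = (n:ℝ) by ring]
      rw [← Int.cast_abs]
      exact_mod_cast Int.one_le_abs (by omega)
  · -- use diagonal edge, v = 0
    refine ⟨((0 : ℝ), (0 : ℝ)), key _ ((1:ℝ),(0:ℝ)) ((0:ℝ),(1:ℝ)) ((-1:ℝ),(1:ℝ)) (by norm_num [Prod.ext_iff])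
      ?_ ?_ ?_ ?_ ?_⟩
    · exact subset_convexHull ℝ _ (by norm_num [Prod.ext_iff])
    · exact subset_convexHull ℝ _ (by norm_num [Prod.ext_iff])
    · show _ ∈ Δ₂
      exact subset_convexHull ℝ _ (by norm_num [Prod.ext_iff])
    · show _ ∈ Δ₂
      exact subset_convexHull ℝ _ (by norm_num [Prod.ext_iff])
    · simp only [hd1, hd2]
      rw [show (-1:ℝ) * (n:ℝ) - 1 * (m:ℝ) = -((m:ℝ) + (n:ℝ)) by ring, abs_neg]
      rw [show (m:ℝ) + (n:ℝ) = ((m + n : ℤ) : ℝ) by push_cast; ring, ← Int.cast_abs]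
      exact_mod_cast Int.one_le_abs hc
end

section
/- Let Δ₁ = conv{(0,0),(1,0),(0,1)} and Δ₂ = conv{(1,0),(0,1),(1,1)} in ℝ², let T ⊂ ℤ² be a finite nonempty set, and let Δ = conv(T). Assume that the area of Δ₁ + Δ and the area of Δ₂ + Δ are both at least 2. Then the three-dimensional Lebesgue measure of the convex hull in ℝ³ of {(x, y, 0) : (x, y) ∈ Δ₁ + Δ} ∪ {(x, y, 1) : (x, y) ∈ Δ₂ + Δ} is at least 11/6. -/
open scoped Pointwise
open MeasureTheory

/-!
The convex hull contains, at height `z ∈ (0, 1)`, the Minkowski combination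
`(1 - z) • A + z • B` of `A = Δ₁ + Δ` and `B = Δ₂ + Δ`, so by Fubini it suffices that every such
slice has area at least `min (area A) (area B) ≥ 2 > 11/6`.

For planar convex bodies `X`, `Y` whose shadows on the first axis have lengths `u, v > 0`, run
through both shadows at speeds proportional to `u` and `v`: the fibres of `X` and `Y` over
corresponding points add up inside a fibre of `X + Y`, so one-dimensional Brunn–Minkowski and a
change of variables give `area X / u + area Y / v ≤ area (X + Y) / (u + v)`. For `X = (1 - z) • A`,
`Y = z • B` the left side is at least `min (area A) (area B) * ((1 - z)² / u + z² / v)`, and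
`(1 - z)² / u + z² / v ≥ 1 / (u + v)` by Cauchy–Schwarz.
-/

open scoped ENNReal
open Set

theorem Convex.prodMk_preimage {𝕜 E F : Type*} [Semiring 𝕜] [PartialOrder 𝕜] [AddCommMonoid E]
    [Module 𝕜 E] [AddCommMonoid F] [Module 𝕜 F] {X : Set (E × F)} (hX : Convex 𝕜 X) (x : E) :
    Convex 𝕜 (Prod.mk x ⁻¹' X) := by
  intro y₁ hy₁ y₂ hy₂ s t hs ht hst
  convert hX hy₁ hy₂ hs ht hst using 1
  simp [← add_smul, hst]

theorem IsCompact.prodMk_preimage {α β : Type*} [TopologicalSpace α] [TopologicalSpace β]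
    [T2Space α] [T2Space β] {X : Set (α × β)} (hX : IsCompact X) (x : α) :
    IsCompact (Prod.mk x ⁻¹' X) :=
  (hX.image continuous_snd).of_isClosed_subset (hX.isClosed.preimage (.prodMk_right x))
    fun y hy => ⟨(x, y), hy, rfl⟩

theorem prodMk_preimage_nonempty_iff {α β : Type*} {X : Set (α × β)} {x : α} :
    (Prod.mk x ⁻¹' X).Nonempty ↔ x ∈ Prod.fst '' X :=
  ⟨fun ⟨y, hy⟩ => ⟨(x, y), hy, rfl⟩, fun ⟨p, hp, hpx⟩ => ⟨p.2, by rwa [← hpx]⟩⟩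

theorem prodMk_preimage_add_subset {α β : Type*} [Add α] [Add β] (X Y : Set (α × β)) (x y : α) :
    Prod.mk x ⁻¹' X + Prod.mk y ⁻¹' Y ⊆ Prod.mk (x + y) ⁻¹' (X + Y) := by
  rintro _ ⟨y₁, hy₁, y₂, hy₂, rfl⟩
  exact ⟨(x, y₁), hy₁, (y, y₂), hy₂, rfl⟩

theorem Convex.eq_Icc_of_isCompact {P : Set ℝ} (hc : Convex ℝ P) (hk : IsCompact P)
    (hn : P.Nonempty) : P = Icc (sInf P) (sSup P) :=
  eq_Icc_of_connected_compact (hc.isConnected hn) hk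

theorem Real.volume_add_of_convex {P Q : Set ℝ} (hPc : Convex ℝ P) (hQc : Convex ℝ Q)
    (hPk : IsCompact P) (hQk : IsCompact Q) (hPn : P.Nonempty) (hQn : Q.Nonempty) :
    volume (P + Q) = volume P + volume Q := by
  have hP := hPc.eq_Icc_of_isCompact hPk hPn
  have hQ := hQc.eq_Icc_of_isCompact hQk hQn
  have hP' : sInf P ≤ sSup P := csInf_le_csSup hPn hPk.bddBelow hPk.bddAbove
  have hQ' : sInf Q ≤ sSup Q := csInf_le_csSup hQn hQk.bddBelow hQk.bddAbove
  rw [hP, hQ, Icc_add_Icc hP' hQ', Real.volume_Icc, Real.volume_Icc, Real.volume_Icc,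
    ← ENNReal.ofReal_add (by linarith) (by linarith)]
  congr 1
  ring

theorem exists_fst_image_eq_Icc {F : Type*} [AddCommGroup F] [Module ℝ F] [TopologicalSpace F]
    {X : Set (ℝ × F)} (hc : Convex ℝ X) (hk : IsCompact X) {p q : ℝ × F} (hp : p ∈ X)
    (hq : q ∈ X) (hpq : p.1 < q.1) : ∃ a u, 0 < u ∧ Prod.fst '' X = Icc a (a + u) := by
  set P := Prod.fst '' X
  have hPk : IsCompact P := hk.image continuous_fst
  have hp' : p.1 ∈ P := mem_image_of_mem _ hp
  have hq' : q.1 ∈ P := mem_image_of_mem _ hq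
  refine ⟨sInf P, sSup P - sInf P, ?_, ?_⟩
  · linarith [csInf_le hPk.bddBelow hp', le_csSup hPk.bddAbove hq']
  · rw [add_sub_cancel]
    exact (hc.linear_image (LinearMap.fst ℝ ℝ F)).eq_Icc_of_isCompact hPk ⟨_, hp'⟩

theorem lintegral_comp_add_mul {f : ℝ → ℝ≥0∞} (hf : Measurable f) (a : ℝ) {u : ℝ} (hu : 0 < u) :
    ∫⁻ t, f (a + u * t) = ENNReal.ofReal u⁻¹ * ∫⁻ x, f x := by
  have hg : Measurable fun x => f (a + x) := hf.comp (measurable_const_add a)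
  rw [← lintegral_add_left_eq_self f a, ← lintegral_map hg (measurable_const_mul u),
    Real.map_volume_mul_left hu.ne', lintegral_smul_measure, abs_of_pos (inv_pos.2 hu),
    smul_eq_mul]

theorem volume_prodMk_preimage_eq_zero {α β : Type*} [MeasureSpace β] {X : Set (α × β)} {x : α}
    (hx : x ∉ Prod.fst '' X) :
    volume (Prod.mk x ⁻¹' X) = 0 := by
  rw [not_nonempty_iff_eq_empty.1 (mt prodMk_preimage_nonempty_iff.1 hx), measure_empty]

theorem ofReal_inv_mul_volume_add_le {X Y : Set (ℝ × ℝ)} {a b u v : ℝ}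
    (hXc : Convex ℝ X) (hYc : Convex ℝ Y) (hXk : IsCompact X) (hYk : IsCompact Y)
    (hX : Prod.fst '' X = Icc a (a + u)) (hY : Prod.fst '' Y = Icc b (b + v))
    (hu : 0 < u) (hv : 0 < v) :
    ENNReal.ofReal u⁻¹ * volume X + ENNReal.ofReal v⁻¹ * volume Y
      ≤ ENNReal.ofReal (u + v)⁻¹ * volume (X + Y) := by
  have volume_eq : ∀ Z : Set (ℝ × ℝ), IsCompact Z →
      volume Z = ∫⁻ x, volume (Prod.mk x ⁻¹' Z) := fun Z hZ => by
    rw [Measure.volume_eq_prod]; exact Measure.prod_apply hZ.isClosed.measurableSet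
  have fiber_measurable : ∀ Z : Set (ℝ × ℝ), IsCompact Z →
      Measurable fun x => volume (Prod.mk x ⁻¹' Z) := fun Z hZ =>
    measurable_measure_prodMk_left hZ.isClosed.measurableSet
  have mem_iff : ∀ {c w : ℝ} (t : ℝ), 0 < w → (c + w * t ∈ Icc c (c + w) ↔ t ∈ Icc 0 1) :=
    fun t hw => by simp [hw, mul_le_iff_le_one_right]
  -- Traverse the two projections at proportional speeds, so that fibres are nonempty together.
  have fiber_le : ∀ t, volume (Prod.mk (a + u * t) ⁻¹' X) + volume (Prod.mk (b + v * t) ⁻¹' Y)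
      ≤ volume (Prod.mk (a + b + (u + v) * t) ⁻¹' (X + Y)) := fun t => by
    by_cases ht : t ∈ Icc 0 1
    · have hXt := prodMk_preimage_nonempty_iff.2 (hX ▸ (mem_iff t hu).2 ht)
      have hYt := prodMk_preimage_nonempty_iff.2 (hY ▸ (mem_iff t hv).2 ht)
      rw [← Real.volume_add_of_convex (hXc.prodMk_preimage _) (hYc.prodMk_preimage _)
        (hXk.prodMk_preimage _) (hYk.prodMk_preimage _) hXt hYt,
        show a + b + (u + v) * t = a + u * t + (b + v * t) by ring]
      exact measure_mono (prodMk_preimage_add_subset X Y _ _)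
    · rw [volume_prodMk_preimage_eq_zero (hX ▸ mt (mem_iff t hu).1 ht),
        volume_prodMk_preimage_eq_zero (hY ▸ mt (mem_iff t hv).1 ht), add_zero]
      exact zero_le
  rw [volume_eq X hXk, volume_eq Y hYk, volume_eq _ (hXk.add hYk),
    ← lintegral_comp_add_mul (fiber_measurable X hXk) a hu,
    ← lintegral_comp_add_mul (fiber_measurable Y hYk) b hv,
    ← lintegral_comp_add_mul (fiber_measurable _ (hXk.add hYk)) (a + b) (add_pos hu hv)]
  have hXt : Measurable fun t => volume (Prod.mk (a + u * t) ⁻¹' X) :=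
    (fiber_measurable X hXk).comp (by fun_prop)
  exact (lintegral_add_left hXt _).symm.trans_le (lintegral_mono fiber_le)

theorem inv_add_le_sq_div_add_sq_div {s t u v : ℝ} (hst : s + t = 1) (hu : 0 < u) (hv : 0 < v) :
    (u + v)⁻¹ ≤ s ^ 2 / u + t ^ 2 / v := by
  have := Finset.sq_sum_div_le_sum_sq_div Finset.univ ![s, t] (g := ![u, v])
    (by simp [Fin.forall_fin_two, hu, hv])
  simpa [Fin.sum_univ_two, hst] using this

theorem min_volume_le_volume_one_sub_smul_add_smul {A B : Set (ℝ × ℝ)}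
    (hAc : Convex ℝ A) (hBc : Convex ℝ B) (hAk : IsCompact A) (hBk : IsCompact B)
    {p q p' q' : ℝ × ℝ} (hp : p ∈ A) (hq : q ∈ A) (hpq : p.1 < q.1)
    (hp' : p' ∈ B) (hq' : q' ∈ B) (hpq' : p'.1 < q'.1) {z : ℝ} (hz : z ∈ Ioo 0 1) :
    min (volume A) (volume B) ≤ volume ((1 - z) • A + z • B) := by
  have hz₀ : 0 < z := hz.1
  have hz₁ : 0 < 1 - z := sub_pos.2 hz.2
  obtain ⟨a, u, hu, hX⟩ := exists_fst_image_eq_Icc (hAc.smul (1 - z)) (hAk.smul (1 - z))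
    (smul_mem_smul_set hp) (smul_mem_smul_set hq) (by simpa using mul_lt_mul_of_pos_left hpq hz₁)
  obtain ⟨b, v, hv, hY⟩ := exists_fst_image_eq_Icc (hBc.smul z) (hBk.smul z)
    (smul_mem_smul_set hp') (smul_mem_smul_set hq') (by simpa using mul_lt_mul_of_pos_left hpq' hz₀)
  have key := ofReal_inv_mul_volume_add_le (hAc.smul _) (hBc.smul _) (hAk.smul _) (hBk.smul _)
    hX hY hu hv
  rw [Measure.addHaar_smul_of_nonneg _ hz₁.le, Measure.addHaar_smul_of_nonneg _ hz₀.le,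
    Module.finrank_prod, Module.finrank_self, one_add_one_eq_two] at key
  set m := min (volume A) (volume B)
  have hinv : ENNReal.ofReal (u + v)⁻¹ ≠ 0 := (ENNReal.ofReal_pos.2 (by positivity)).ne'
  refine (ENNReal.mul_le_mul_iff_right hinv ENNReal.ofReal_ne_top).1 (le_trans ?_ key)
  calc ENNReal.ofReal (u + v)⁻¹ * m
      ≤ ENNReal.ofReal ((1 - z) ^ 2 / u + z ^ 2 / v) * m :=
        by gcongr; exact inv_add_le_sq_div_add_sq_div (sub_add_cancel 1 z) hu hv
    _ = ENNReal.ofReal u⁻¹ * (ENNReal.ofReal ((1 - z) ^ 2) * m)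
          + ENNReal.ofReal v⁻¹ * (ENNReal.ofReal (z ^ 2) * m) := by
        rw [ENNReal.ofReal_add (by positivity) (by positivity), div_eq_inv_mul, div_eq_inv_mul,
          ENNReal.ofReal_mul (by positivity), ENNReal.ofReal_mul (by positivity)]
        ring
    _ ≤ _ := by gcongr <;> simp [m]

theorem volume_eq_lintegral_volume_slice {α β γ : Type*} [MeasureSpace α] [MeasureSpace β]
    [MeasureSpace γ] [SFinite (volume : Measure α)] [SFinite (volume : Measure β)]
    [SFinite (volume : Measure γ)] {S : Set (α × β × γ)} (hS : MeasurableSet S) :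
    volume S = ∫⁻ z, volume ((fun p : α × β => (p.1, p.2, z)) ⁻¹' S) := by
  show (volume.prod (volume.prod volume) : Measure (α × β × γ)) S = _
  rw [← (measurePreserving_prodAssoc volume volume volume).measure_preimage hS.nullMeasurableSet]
  exact Measure.prod_apply_symm (hS.preimage (MeasurableEquiv.measurable _))

theorem one_sub_smul_add_smul_subset_slice_convexHull (A B : Set (ℝ × ℝ)) {z : ℝ}
    (hz : z ∈ Icc 0 1) :
    (1 - z) • A + z • B ⊆ (fun p : ℝ × ℝ => (p.1, p.2, z)) ⁻¹' convexHull ℝ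
      ((fun p : ℝ × ℝ => (p.1, p.2, (0 : ℝ))) '' A ∪
        (fun p : ℝ × ℝ => (p.1, p.2, (1 : ℝ))) '' B) := by
  set S := convexHull ℝ
    ((fun p : ℝ × ℝ => (p.1, p.2, (0 : ℝ))) '' A ∪ (fun p : ℝ × ℝ => (p.1, p.2, (1 : ℝ))) '' B)
  rintro x ⟨_, ⟨a, ha, rfl⟩, _, ⟨b, hb, rfl⟩, rfl⟩
  have ha' : (a.1, a.2, (0 : ℝ)) ∈ S := subset_convexHull ℝ _ (Or.inl ⟨a, ha, rfl⟩)
  have hb' : (b.1, b.2, (1 : ℝ)) ∈ S := subset_convexHull ℝ _ (Or.inr ⟨b, hb, rfl⟩)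
  refine mem_preimage.2 ?_
  convert convex_convexHull ℝ _ ha' hb' (sub_nonneg.2 hz.2) hz.1 (sub_add_cancel 1 z) using 1
  ext <;> simp

theorem min_volume_le_volume_convexHull {A B : Set (ℝ × ℝ)}
    (hAc : Convex ℝ A) (hBc : Convex ℝ B) (hAk : IsCompact A) (hBk : IsCompact B)
    {p q p' q' : ℝ × ℝ} (hp : p ∈ A) (hq : q ∈ A) (hpq : p.1 < q.1)
    (hp' : p' ∈ B) (hq' : q' ∈ B) (hpq' : p'.1 < q'.1) :
    min (volume A) (volume B) ≤ volume (convexHull ℝ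
      ((fun p : ℝ × ℝ => (p.1, p.2, (0 : ℝ))) '' A ∪
        (fun p : ℝ × ℝ => (p.1, p.2, (1 : ℝ))) '' B)) := by
  set S := convexHull ℝ
    ((fun p : ℝ × ℝ => (p.1, p.2, (0 : ℝ))) '' A ∪ (fun p : ℝ × ℝ => (p.1, p.2, (1 : ℝ))) '' B)
  -- `S` need not be measurable a priori; its closure is, and differs from it by a null set.
  have closure_le : volume (closure S) ≤ volume S := by
    -- instance search does not see through the nested product
    have : (volume : Measure (ℝ × ℝ × ℝ)).IsAddHaarMeasure := Measure.prod.instIsAddHaarMeasure _ _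
    rw [closure_eq_self_union_frontier]
    refine (measure_union_le _ _).trans ?_
    rw [(convex_convexHull ℝ _).addHaar_frontier volume, add_zero]
  calc min (volume A) (volume B) = ∫⁻ _ in Ioo (0 : ℝ) 1, min (volume A) (volume B) := by
        simp
    _ ≤ ∫⁻ z in Ioo (0 : ℝ) 1, volume ((fun p : ℝ × ℝ => (p.1, p.2, z)) ⁻¹' closure S) :=
        setLIntegral_mono' measurableSet_Ioo fun z hz =>
          (min_volume_le_volume_one_sub_smul_add_smul hAc hBc hAk hBk hp hq hpq hp' hq' hpq'
            hz).trans (measure_mono ((one_sub_smul_add_smul_subset_slice_convexHull A B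
              (Ioo_subset_Icc_self hz)).trans (preimage_mono subset_closure)))
    _ ≤ ∫⁻ z, volume ((fun p : ℝ × ℝ => (p.1, p.2, z)) ⁻¹' closure S) :=
        setLIntegral_le_lintegral _ _
    _ = volume (closure S) := (volume_eq_lintegral_volume_slice isClosed_closure.measurableSet).symm
    _ ≤ volume S := closure_le

theorem volume_convexHull_ge_eleven_sixths_general (T : Finset (ℤ × ℤ))
    (Δ : Set (ℝ × ℝ))
    (hΔ : Δ = convexHull ℝ ((fun p : ℤ × ℤ => ((p.1 : ℝ), (p.2 : ℝ))) '' (T : Set (ℤ × ℤ))))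
    (h1 : 2 ≤ volume (Δ₁ + Δ)) (h2 : 2 ≤ volume (Δ₂ + Δ)) :
    11 / 6 ≤ volume (convexHull ℝ
      ((fun p : ℝ × ℝ => (p.1, p.2, (0 : ℝ))) '' (Δ₁ + Δ) ∪
       (fun p : ℝ × ℝ => (p.1, p.2, (1 : ℝ))) '' (Δ₂ + Δ))) := by
  have hΔc : Convex ℝ Δ := hΔ ▸ convex_convexHull ℝ _
  have hΔk : IsCompact Δ := hΔ ▸ (T.finite_toSet.image _).isCompact_convexHull ℝ
  obtain ⟨d, hd⟩ : Δ.Nonempty := nonempty_iff_ne_empty.2 fun h => by simp [h] at h1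
  have hΔ₁k : IsCompact Δ₁ := (toFinite _).isCompact_convexHull ℝ
  have hΔ₂k : IsCompact Δ₂ := (toFinite _).isCompact_convexHull ℝ
  have h00 : ((0 : ℝ), (0 : ℝ)) ∈ Δ₁ := subset_convexHull ℝ _ (by simp)
  have h10 : ((1 : ℝ), (0 : ℝ)) ∈ Δ₁ := subset_convexHull ℝ _ (by simp)
  have h10' : ((1 : ℝ), (0 : ℝ)) ∈ Δ₂ := subset_convexHull ℝ _ (by simp)
  have h01' : ((0 : ℝ), (1 : ℝ)) ∈ Δ₂ := subset_convexHull ℝ _ (by simp)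
  refine le_trans ?_ (min_volume_le_volume_convexHull ((convex_convexHull ℝ _).add hΔc)
    ((convex_convexHull ℝ _).add hΔc) (hΔ₁k.add hΔk) (hΔ₂k.add hΔk) (add_mem_add h00 hd)
    (add_mem_add h10 hd) (by simp) (add_mem_add h01' hd) (add_mem_add h10' hd) (by simp))
  have : (11 / 6 : ℝ≥0∞) ≤ 2 := ENNReal.div_le_of_le_mul (by norm_num)
  exact le_min (this.trans h1) (this.trans h2)

/-- **The `11/6` volume bound** (Lemma `vol5/3` of the paper): if the areas of `Δ₁ + Δ`
and `Δ₂ + Δ` are both at least `2`, then the volume of the convex hull of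
`(Δ₁ + Δ) × {0} ∪ (Δ₂ + Δ) × {1}` in `ℝ³` is at least `11/6`. -/
theorem volume_convexHull_ge_eleven_sixths (T : Finset (ℤ × ℤ)) (hT : T.Nonempty)
    (Δ : Set (ℝ × ℝ))
    (hΔ : Δ = convexHull ℝ ((fun p : ℤ × ℤ => ((p.1 : ℝ), (p.2 : ℝ))) '' (T : Set (ℤ × ℤ))))
    (h1 : 2 ≤ volume (Δ₁ + Δ)) (h2 : 2 ≤ volume (Δ₂ + Δ)) :
    11 / 6 ≤ volume (convexHull ℝ
      ((fun p : ℝ × ℝ => (p.1, p.2, (0 : ℝ))) '' (Δ₁ + Δ) ∪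
       (fun p : ℝ × ℝ => (p.1, p.2, (1 : ℝ))) '' (Δ₂ + Δ))) :=
  volume_convexHull_ge_eleven_sixths_general T Δ hΔ h1 h2
end
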